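/- arXiv:2503.13001 — 5 statements merged into one kernel-verified Lean document; each statement's English description precedes it below -/
import Mathlib

section
/- Let v ∈ ℝ² and let f : ℝ² → ℝ be a v-function with exactly three pieces P₀, P₁, P₂ whose affine components are f₀, f₁, f₂. Then there exist signs σ₁, σ₂ ∈ {−1, 1} and affine functions g₁, g₂, g₃ : ℝ² → ℝ, each of which belongs to the set {f₀, f₁, f₂, −f₀, −f₁, −f₂}, such that f(x) = σ₁ · max( g₁(x), σ₂ · max( g₂(x), g₃(x) ) ) for all x ∈ ℝ². -/
open Set

noncomputable section

/-- The plane `ℝ²`, modeled as functions `Fin 2 → ℝ`. -/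
abbrev E2 := Fin 2 → ℝ

/-- `f : ℝ² → ℝ` is affine: `f x = ⟨a, x⟩ + b`. -/
def IsAffineFn (f : E2 → ℝ) : Prop :=
  ∃ (a : E2) (b : ℝ), ∀ x, f x = dotProduct a x + b

/-- `f : ℝ² → ℝ` is linear: `f x = ⟨a, x⟩`. -/
def IsLinearFn (f : E2 → ℝ) : Prop :=
  ∃ a : E2, ∀ x, f x = dotProduct a x

/-- An affine line in the plane. -/
def IsLine (l : Set E2) : Prop :=
  ∃ v u : E2, u ≠ 0 ∧ l = {x | ∃ t : ℝ, x = v + t • u}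

/-- A polygonal piece: a regular closed set with nonempty connected interior whose
frontier is contained in a finite union of affine lines. -/
def IsPolygonalPiece (P : Set E2) : Prop :=
  IsClosed P ∧ (interior P).Nonempty ∧ IsConnected (interior P) ∧
    P = closure (interior P) ∧
    ∃ (m : ℕ) (L : Fin m → Set E2), (∀ i, IsLine (L i)) ∧ frontier P ⊆ ⋃ i, L i

/-- `Ps` is an admissible family of pieces for `f`. -/
def IsAdmissible (f : E2 → ℝ) (Ps : Finset (Set E2)) : Prop :=
  (∀ P ∈ Ps, IsPolygonalPiece P) ∧
  (⋃ P ∈ Ps, P) = univ ∧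
  (∀ P ∈ Ps, ∀ Q ∈ Ps, P ≠ Q → P ∩ Q = frontier P ∩ frontier Q) ∧
  (∀ P ∈ Ps, ∃ g : E2 → ℝ, IsAffineFn g ∧ EqOn f g P)

/-- `f` is continuous piecewise affine with (at most) `p` pieces. -/
def IsCPA (p : ℕ) (f : E2 → ℝ) : Prop :=
  Continuous f ∧ ∃ Ps : Finset (Set E2), Ps.card ≤ p ∧ IsAdmissible f Ps

/-- `P` is a cone with apex `v`. -/
def IsConeWithApex (v : E2) (P : Set E2) : Prop :=
  ∀ x ∈ P, ∀ t : ℝ, 0 ≤ t → v + t • (x - v) ∈ P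

/-- A `v`-function with (at most) `p` pieces: a CPA function admitting an admissible
family of pieces all of which are cones with apex `v`. -/
def IsVFunction (v : E2) (p : ℕ) (f : E2 → ℝ) : Prop :=
  Continuous f ∧ ∃ Ps : Finset (Set E2), Ps.card ≤ p ∧ IsAdmissible f Ps ∧
    ∀ P ∈ Ps, IsConeWithApex v P

/-- A CPL function with (at most) `p` pieces: a `0`-function whose affine components
are linear. -/
def IsCPL (p : ℕ) (f : E2 → ℝ) : Prop :=
  Continuous f ∧ ∃ Ps : Finset (Set E2), Ps.card ≤ p ∧ IsAdmissible f Ps ∧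
    (∀ P ∈ Ps, IsConeWithApex 0 P) ∧
    ∀ P ∈ Ps, ∃ g : E2 → ℝ, IsLinearFn g ∧ EqOn f g P

/-- Componentwise ReLU. -/
def relu {n : ℕ} (x : Fin n → ℝ) : Fin n → ℝ := fun i => max 0 (x i)

/-!
Every piece is a closed cone containing `v`, so the affine components agree at `v` and `f` is
determined by `θ ↦ f (v + (cos θ, sin θ))`. Lifting paths in the connected interiors through
`exp : ℂ → ℂ \ {0}` shows that the pieces meet the unit circle around `v` in three consecutive
arcs `[a, b]`, `[b, c]`, `[c, a + 2π]`. On each arc `f` is a sinusoid `f v + α cos θ + β sin θ`,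
and adjacent sinusoids differ by `K sin (θ - z)`, `z` their common endpoint; `K ≤ 0` means that
`f` bends convexly at `z`. Up to negation and rotation, either all three bends are convex and all
arcs are at most `π`, and then `f = max f₀ (max f₁ f₂)`; or both bends at the ends of `[a, b]`
are convex, the one at `c` is concave and the other two arcs are at most `π`, and then
`f = max f₀ (min f₁ f₂)`. The second case covers an arc longer than `π`: its end bends agree in
sign and the third bend has the opposite sign.
-/

open Real Function

def IsMaxMinForm {X : Type*} (h p q r : X → ℝ) : Prop :=
  h = p ⊔ (q ⊔ r) ∨ h = p ⊓ (q ⊓ r) ∨ h = p ⊔ (q ⊓ r) ∨ h = p ⊓ (q ⊔ r)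

def IsNestedMaxMin {X : Type*} (h : X → ℝ) (g : Fin 3 → X → ℝ) : Prop :=
  ∃ τ : Equiv.Perm (Fin 3), IsMaxMinForm h (g (τ 0)) (g (τ 1)) (g (τ 2))

section NestedMaxMin

variable {X : Type*} {h p q r : X → ℝ} {g : Fin 3 → X → ℝ}

lemma IsMaxMinForm.neg (H : IsMaxMinForm h p q r) : IsMaxMinForm (-h) (-p) (-q) (-r) := by
  rcases H with rfl | rfl | rfl | rfl
  · exact Or.inr (Or.inl (by simp only [neg_sup]))
  · exact Or.inl (by simp only [neg_inf])
  · exact Or.inr (Or.inr (Or.inr (by simp only [neg_sup, neg_inf])))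
  · exact Or.inr (Or.inr (Or.inl (by simp only [neg_sup, neg_inf])))

lemma IsNestedMaxMin.of_neg (H : IsNestedMaxMin (-h) (-g)) : IsNestedMaxMin h g := by
  obtain ⟨τ, hτ⟩ := H
  refine ⟨τ, ?_⟩
  simpa only [neg_neg, Pi.neg_apply] using hτ.neg

lemma IsNestedMaxMin.of_comp (σ : Equiv.Perm (Fin 3)) (H : IsNestedMaxMin h (g ∘ σ)) :
    IsNestedMaxMin h g := by
  obtain ⟨τ, hτ⟩ := H
  exact ⟨σ * τ, hτ⟩

lemma IsMaxMinForm.of_monotone {Y : Type*} {h' p' q' r' : Y → ℝ}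
    (H : IsMaxMinForm h' p' q' r')
    (hm : ∀ x, ∃ y, ∃ m : ℝ → ℝ, Monotone m ∧
      h x = m (h' y) ∧ p x = m (p' y) ∧ q x = m (q' y) ∧ r x = m (r' y)) :
    IsMaxMinForm h p q r := by
  choose y m hmono hh hp hq hr using hm
  refine H.imp ?_ (Or.imp ?_ (Or.imp ?_ ?_)) <;> intro H' <;> funext x <;>
    simp only [hh, hp, hq, hr, H', Pi.sup_apply, Pi.inf_apply, (hmono x).map_max,
      (hmono x).map_min]

lemma IsMaxMinForm.exists_signed_max {S : Set (X → ℝ)}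
    (H : IsMaxMinForm h p q r) (hp : p ∈ S ∧ -p ∈ S) (hq : q ∈ S ∧ -q ∈ S)
    (hr : r ∈ S ∧ -r ∈ S) :
    ∃ σ₁ σ₂ : ℝ, (σ₁ = 1 ∨ σ₁ = -1) ∧ (σ₂ = 1 ∨ σ₂ = -1) ∧ ∃ g₁ g₂ g₃ : X → ℝ,
      g₁ ∈ S ∧ g₂ ∈ S ∧ g₃ ∈ S ∧ ∀ x, h x = σ₁ * max (g₁ x) (σ₂ * max (g₂ x) (g₃ x)) := by
  rcases H with rfl | rfl | rfl | rfl
  · exact ⟨1, 1, by simp, by simp, p, q, r, hp.1, hq.1, hr.1, fun x => by simp⟩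
  · exact ⟨-1, 1, by simp, by simp, -p, -q, -r, hp.2, hq.2, hr.2, fun x => by simp [max_neg_neg]⟩
  · exact ⟨1, -1, by simp, by simp, p, -q, -r, hp.1, hq.2, hr.2, fun x => by simp [max_neg_neg]⟩
  · exact ⟨-1, -1, by simp, by simp, -p, q, r, hp.2, hq.1, hr.1, fun x => by simp [max_neg_neg]⟩

end NestedMaxMin

lemma exists_mul_sin_sub {α β z : ℝ} (hz : α * cos z + β * sin z = 0) :
    ∃ K, ∀ θ, α * cos θ + β * sin θ = K * sin (θ - z) :=
  ⟨β * cos z - α * sin z, fun θ => by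
    rw [sin_sub]
    linear_combination (cos θ * cos z + sin θ * sin z) * hz -
      (α * cos θ + β * sin θ) * sin_sq_add_cos_sq z⟩

lemma sin_sub_nonneg {x z : ℝ} (h₁ : z ≤ x) (h₂ : x ≤ z + π) : 0 ≤ sin (x - z) :=
  sin_nonneg_of_nonneg_of_le_pi (by linarith) (by linarith)

lemma sin_sub_nonpos {x z : ℝ} (h₁ : z - π ≤ x) (h₂ : x ≤ z) : sin (x - z) ≤ 0 :=
  sin_nonpos_of_nonpos_of_neg_pi_le (by linarith) (by linarith)

/-- `K i` measures the bend of `h` at the end of arc `i`; the bend is convex iff `K i ≤ 0`. -/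
structure ThreeArcs (h : ℝ → ℝ) (g : Fin 3 → ℝ → ℝ) (a b c : ℝ) (K : Fin 3 → ℝ) : Prop where
  lt_ab : a < b
  lt_bc : b < c
  lt_ca : c < a + 2 * π
  periodic : Periodic h (2 * π)
  periodic_g : ∀ i, Periodic (g i) (2 * π)
  eqOn₀ : EqOn h (g 0) (Icc a b)
  eqOn₁ : EqOn h (g 1) (Icc b c)
  eqOn₂ : EqOn h (g 2) (Icc c (a + 2 * π))
  bend₀ : ∀ θ, g 0 θ - g 1 θ = K 0 * sin (θ - b)
  bend₁ : ∀ θ, g 1 θ - g 2 θ = K 1 * sin (θ - c)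
  bend₂ : ∀ θ, g 2 θ - g 0 θ = K 2 * sin (θ - a)

namespace ThreeArcs

variable {h : ℝ → ℝ} {g : Fin 3 → ℝ → ℝ} {a b c : ℝ} {K : Fin 3 → ℝ}

lemma neg (H : ThreeArcs h g a b c K) : ThreeArcs (-h) (-g) a b c (-K) where
  lt_ab := H.lt_ab
  lt_bc := H.lt_bc
  lt_ca := H.lt_ca
  periodic θ := by simp [H.periodic θ]
  periodic_g i θ := by simp [H.periodic_g i θ]
  eqOn₀ θ hθ := by simp [H.eqOn₀ hθ]
  eqOn₁ θ hθ := by simp [H.eqOn₁ hθ]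
  eqOn₂ θ hθ := by simp [H.eqOn₂ hθ]
  bend₀ θ := by simp only [Pi.neg_apply]; linear_combination -H.bend₀ θ
  bend₁ θ := by simp only [Pi.neg_apply]; linear_combination -H.bend₁ θ
  bend₂ θ := by simp only [Pi.neg_apply]; linear_combination -H.bend₂ θ

lemma bend₂' (H : ThreeArcs h g a b c K) (θ : ℝ) :
    g 2 θ - g 0 θ = K 2 * sin (θ - (a + 2 * π)) := by
  rw [show θ - (a + 2 * π) = θ - a - 2 * π by ring, sin_sub_two_pi]
  exact H.bend₂ θ

lemma rotate (H : ThreeArcs h g a b c K) :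
    ThreeArcs h (g ∘ finRotate 3) b c (a + 2 * π) (K ∘ finRotate 3) where
  lt_ab := H.lt_bc
  lt_bc := H.lt_ca
  lt_ca := by linarith [H.lt_ab]
  periodic := H.periodic
  periodic_g i := H.periodic_g _
  eqOn₀ := H.eqOn₁
  eqOn₁ := H.eqOn₂
  eqOn₂ θ hθ := by
    have hmem : θ - 2 * π ∈ Icc a b := ⟨by linarith [hθ.1], by linarith [hθ.2]⟩
    have := H.eqOn₀ hmem
    rw [H.periodic.sub_eq, (H.periodic_g 0).sub_eq] at this
    exact this
  bend₀ := H.bend₁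
  bend₁ := H.bend₂'
  bend₂ := H.bend₀

lemma eq_of_eqOn {F : ℝ → ℝ} (H : ThreeArcs h g a b c K) (hF : Periodic F (2 * π))
    (h₀ : EqOn F (g 0) (Icc a b)) (h₁ : EqOn F (g 1) (Icc b c))
    (h₂ : EqOn F (g 2) (Icc c (a + 2 * π))) : h = F := by
  have hEq : EqOn h F (Icc a (a + 2 * π)) := fun θ hθ => by
    rcases le_total θ b with hb | hb
    · rw [H.eqOn₀ ⟨hθ.1, hb⟩, h₀ ⟨hθ.1, hb⟩]
    rcases le_total θ c with hc | hc
    · rw [H.eqOn₁ ⟨hb, hc⟩, h₁ ⟨hb, hc⟩]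
    · rw [H.eqOn₂ ⟨hc, hθ.2⟩, h₂ ⟨hc, hθ.2⟩]
  funext θ
  obtain ⟨y, hy, hθy⟩ := (H.periodic.sub hF).exists_mem_Ico two_pi_pos θ a
  simpa [sub_eq_zero, hEq (Ico_subset_Icc_self hy)] using hθy

lemma periodic_sup_inf (H : ThreeArcs h g a b c K) {F : ℝ → ℝ}
    (hF : F = g 0 ⊔ (g 1 ⊔ g 2) ∨ F = g 0 ⊔ (g 1 ⊓ g 2)) : Periodic F (2 * π) := by
  rcases hF with rfl | rfl <;> intro θ <;>
    simp only [Pi.sup_apply, Pi.inf_apply, H.periodic_g _ θ]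

lemma isNestedMaxMin_of_convex (H : ThreeArcs h g a b c K) (hK : ∀ i, K i ≤ 0)
    (l₀ : b - a ≤ π) (l₁ : c - b ≤ π) (l₂ : a + 2 * π - c ≤ π) : IsNestedMaxMin h g := by
  refine ⟨1, Or.inl (H.eq_of_eqOn (H.periodic_sup_inf (Or.inl rfl))
    (fun θ hθ => ?_) (fun θ hθ => ?_) (fun θ hθ => ?_))⟩
  · have h₁ : g 1 θ ≤ g 0 θ := by
      nlinarith [H.bend₀ θ, hK 0, sin_sub_nonpos (by linarith [hθ.1]) hθ.2]
    have h₂ : g 2 θ ≤ g 0 θ := by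
      nlinarith [H.bend₂ θ, hK 2, sin_sub_nonneg hθ.1 (by linarith [hθ.2])]
    exact max_eq_left (max_le h₁ h₂)
  · have h₀ : g 0 θ ≤ g 1 θ := by
      nlinarith [H.bend₀ θ, hK 0, sin_sub_nonneg hθ.1 (by linarith [hθ.2])]
    have h₂ : g 2 θ ≤ g 1 θ := by
      nlinarith [H.bend₁ θ, hK 1, sin_sub_nonpos (by linarith [hθ.1]) hθ.2]
    show max (g 0 θ) (max (g 1 θ) (g 2 θ)) = _
    rw [max_eq_left h₂, max_eq_right h₀]
  · have h₀ : g 0 θ ≤ g 2 θ := by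
      nlinarith [H.bend₂' θ, hK 2, sin_sub_nonpos (by linarith [hθ.1]) hθ.2]
    have h₁ : g 1 θ ≤ g 2 θ := by
      nlinarith [H.bend₁ θ, hK 1, sin_sub_nonneg hθ.1 (by linarith [hθ.2])]
    show max (g 0 θ) (max (g 1 θ) (g 2 θ)) = _
    rw [max_eq_right h₁, max_eq_right h₀]

lemma isNestedMaxMin_of_concave_one (H : ThreeArcs h g a b c K) (hK₀ : K 0 ≤ 0)
    (hK₁ : 0 ≤ K 1) (hK₂ : K 2 ≤ 0) (l₁ : c - b ≤ π) (l₂ : a + 2 * π - c ≤ π) :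
    IsNestedMaxMin h g := by
  refine ⟨1, Or.inr (Or.inr (Or.inl (H.eq_of_eqOn (H.periodic_sup_inf (Or.inr rfl))
    (fun θ hθ => ?_) (fun θ hθ => ?_) (fun θ hθ => ?_))))⟩
  · -- `g 0` dominates `g 2` on `[a, a + π]` and `g 1` on `[b - π, b]`, which cover `[a, b]`
    show max (g 0 θ) (min (g 1 θ) (g 2 θ)) = _
    rcases le_total θ (a + π) with hθa | hθa
    · have h₂ : g 2 θ ≤ g 0 θ := by
        nlinarith [H.bend₂ θ, sin_sub_nonneg hθ.1 hθa]
      exact max_eq_left (min_le_of_right_le h₂)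
    · have h₁ : g 1 θ ≤ g 0 θ := by
        nlinarith [H.bend₀ θ, sin_sub_nonpos (by linarith [H.lt_bc, H.lt_ca]) hθ.2]
      exact max_eq_left (min_le_of_left_le h₁)
  · have h₀ : g 0 θ ≤ g 1 θ := by
      nlinarith [H.bend₀ θ, sin_sub_nonneg hθ.1 (by linarith [hθ.2])]
    have h₂ : g 1 θ ≤ g 2 θ := by
      nlinarith [H.bend₁ θ, sin_sub_nonpos (by linarith [hθ.1]) hθ.2]
    show max (g 0 θ) (min (g 1 θ) (g 2 θ)) = _
    rw [min_eq_left h₂, max_eq_right h₀]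
  · have h₀ : g 0 θ ≤ g 2 θ := by
      nlinarith [H.bend₂' θ, sin_sub_nonpos (by linarith [hθ.1]) hθ.2]
    have h₁ : g 2 θ ≤ g 1 θ := by
      nlinarith [H.bend₁ θ, sin_sub_nonneg hθ.1 (by linarith [hθ.2])]
    show max (g 0 θ) (min (g 1 θ) (g 2 θ)) = _
    rw [min_eq_right h₁, max_eq_right h₀]

lemma bend_signs_of_long_arc (H : ThreeArcs h g a b c K) (l₀ : π < b - a) (hK₀ : K 0 ≤ 0) :
    K 2 ≤ 0 ∧ 0 ≤ K 1 := by
  have hsum : ∀ θ, K 0 * sin (θ - b) + K 1 * sin (θ - c) + K 2 * sin (θ - a) = 0 := fun θ => by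
    linarith [H.bend₀ θ, H.bend₁ θ, H.bend₂ θ]
  have hcb : 0 < sin (c - b) :=
    sin_pos_of_pos_of_lt_pi (by linarith [H.lt_bc]) (by linarith [H.lt_ca])
  have hca : sin (c - a) < 0 := by
    rw [← sin_sub_two_pi]
    exact sin_neg_of_neg_of_neg_pi_lt (by linarith [H.lt_ca]) (by linarith [H.lt_bc])
  have hab : 0 < sin (a - b) := by
    rw [← sin_add_two_pi]
    exact sin_pos_of_pos_of_lt_pi (by linarith [H.lt_bc, H.lt_ca]) (by linarith)
  have hac : 0 < sin (a - c) := by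
    rw [← sin_add_two_pi]
    exact sin_pos_of_pos_of_lt_pi (by linarith [H.lt_ca]) (by linarith [H.lt_bc])
  have hc := hsum c
  have ha := hsum a
  rw [sub_self, sin_zero] at hc ha
  constructor <;> nlinarith

lemma isNestedMaxMin_of_long_arc (H : ThreeArcs h g a b c K) (l₀ : π < b - a) :
    IsNestedMaxMin h g := by
  have l₁ : c - b ≤ π := by linarith [H.lt_ca]
  have l₂ : a + 2 * π - c ≤ π := by linarith [H.lt_bc]
  rcases le_total (K 0) 0 with hK₀ | hK₀
  · obtain ⟨hK₂, hK₁⟩ := H.bend_signs_of_long_arc l₀ hK₀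
    exact H.isNestedMaxMin_of_concave_one hK₀ hK₁ hK₂ l₁ l₂
  · have hK : (-K) 0 ≤ 0 := by simpa using hK₀
    obtain ⟨hK₂, hK₁⟩ := H.neg.bend_signs_of_long_arc l₀ hK
    exact (H.neg.isNestedMaxMin_of_concave_one hK hK₁ hK₂ l₁ l₂).of_neg

lemma isNestedMaxMin_of_two_convex (H : ThreeArcs h g a b c K)
    (l₀ : b - a ≤ π) (l₁ : c - b ≤ π) (l₂ : a + 2 * π - c ≤ π) (hK₀ : K 0 ≤ 0) (hK₂ : K 2 ≤ 0) :
    IsNestedMaxMin h g := by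
  rcases le_total (K 1) 0 with hK₁ | hK₁
  · exact H.isNestedMaxMin_of_convex (fun i => by fin_cases i <;> assumption) l₀ l₁ l₂
  · exact H.isNestedMaxMin_of_concave_one hK₀ hK₁ hK₂ l₁ l₂

lemma isNestedMaxMin_of_short_arcs (H : ThreeArcs h g a b c K)
    (l₀ : b - a ≤ π) (l₁ : c - b ≤ π) (l₂ : a + 2 * π - c ≤ π) : IsNestedMaxMin h g := by
  -- two of the three bends have the same sign, and any two bends are the ends of one arc
  have key : ∀ {h : ℝ → ℝ} {g : Fin 3 → ℝ → ℝ} {K : Fin 3 → ℝ}, ThreeArcs h g a b c K →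
      (K 0 ≤ 0 ∧ K 2 ≤ 0) ∨ (K 1 ≤ 0 ∧ K 0 ≤ 0) ∨ (K 2 ≤ 0 ∧ K 1 ≤ 0) →
      IsNestedMaxMin h g := by
    rintro h g K H (⟨hK₀, hK₂⟩ | ⟨hK₀, hK₂⟩ | ⟨hK₀, hK₂⟩)
    · exact H.isNestedMaxMin_of_two_convex l₀ l₁ l₂ hK₀ hK₂
    · exact (H.rotate.isNestedMaxMin_of_two_convex l₁ l₂ (by linarith) hK₀ hK₂).of_comp _
    · exact ((H.rotate.rotate.isNestedMaxMin_of_two_convex l₂ (by linarith) (by linarith)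
        hK₀ hK₂).of_comp _).of_comp _
  have key_neg : (0 ≤ K 0 ∧ 0 ≤ K 2) ∨ (0 ≤ K 1 ∧ 0 ≤ K 0) ∨ (0 ≤ K 2 ∧ 0 ≤ K 1) →
      IsNestedMaxMin h g := fun hK =>
    (key H.neg (by simpa only [Pi.neg_apply, neg_nonpos] using hK)).of_neg
  rcases le_total (K 0) 0 with h₀ | h₀ <;> rcases le_total (K 1) 0 with h₁ | h₁ <;>
    rcases le_total (K 2) 0 with h₂ | h₂ <;> first
    | exact key H (by tauto) | exact key_neg (by tauto)

theorem isNestedMaxMin (H : ThreeArcs h g a b c K) : IsNestedMaxMin h g := by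
  by_cases l₀ : π < b - a
  · exact H.isNestedMaxMin_of_long_arc l₀
  by_cases l₁ : π < c - b
  · exact (H.rotate.isNestedMaxMin_of_long_arc l₁).of_comp _
  by_cases l₂ : π < a + 2 * π - c
  · exact ((H.rotate.rotate.isNestedMaxMin_of_long_arc (by linarith)).of_comp _).of_comp _
  exact H.isNestedMaxMin_of_short_arcs (not_lt.mp l₀) (not_lt.mp l₁) (not_lt.mp l₂)

end ThreeArcs

/-- The lift to `ℝ` of a connected subset of the circle `ℝ / 2πℤ`. -/
def IsCircleConnected (D : Set ℝ) : Prop :=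
  ∀ θ ∈ D, ∀ θ' ∈ D, ∃ k : ℤ, uIcc θ (θ' + k • (2 * π)) ⊆ D

lemma Function.Periodic.mem_interior {A : Set ℝ} {c : ℝ} (h : Periodic (· ∈ A) c) :
    Periodic (· ∈ interior A) c := by
  have hA : Homeomorph.addRight c ⁻¹' A = A := Set.ext fun x => Iff.of_eq (h x)
  intro x
  have := congrArg (x ∈ ·) ((Homeomorph.addRight c).preimage_interior A)
  rw [hA] at this
  exact this

lemma exists_Ioo_subset_of_notMem {D : Set ℝ} (hD : IsOpen D) {l θ r : ℝ} (hθ : θ ∈ D)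
    (hl : l ∉ D) (hr : r ∉ D) (hlθ : l ≤ θ) (hθr : θ ≤ r) :
    ∃ p q, l ≤ p ∧ p < θ ∧ θ < q ∧ q ≤ r ∧ Ioo p q ⊆ D ∧ p ∉ D ∧ q ∉ D := by
  have hL : IsClosed (Icc l θ ∩ Dᶜ) := isClosed_Icc.inter hD.isClosed_compl
  have hR : IsClosed (Icc θ r ∩ Dᶜ) := isClosed_Icc.inter hD.isClosed_compl
  have hLne : (Icc l θ ∩ Dᶜ).Nonempty := ⟨l, ⟨le_rfl, hlθ⟩, hl⟩
  have hRne : (Icc θ r ∩ Dᶜ).Nonempty := ⟨r, ⟨hθr, le_rfl⟩, hr⟩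
  have hLbdd : BddAbove (Icc l θ ∩ Dᶜ) := ⟨θ, fun y hy => hy.1.2⟩
  have hRbdd : BddBelow (Icc θ r ∩ Dᶜ) := ⟨θ, fun y hy => hy.1.1⟩
  obtain ⟨⟨hlp, hpθ⟩, hp⟩ := hL.csSup_mem hLne hLbdd
  obtain ⟨⟨hθq, hqr⟩, hq⟩ := hR.csInf_mem hRne hRbdd
  refine ⟨_, _, hlp, lt_of_le_of_ne hpθ fun h => hp (by rwa [h]),
    lt_of_le_of_ne hθq fun h => hq (by rwa [← h]), hqr, fun x hx => ?_, hp, hq⟩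
  by_contra hxD
  rcases le_total x θ with hxθ | hxθ
  · exact (le_csSup hLbdd ⟨⟨hlp.trans hx.1.le, hxθ⟩, hxD⟩).not_gt hx.1
  · exact (csInf_le hRbdd ⟨⟨hxθ, hx.2.le.trans hqr⟩, hxD⟩).not_gt hx.2

lemma IsCircleConnected.closure_inter_Ioo_subset {D : Set ℝ} (hD : IsCircleConnected D)
    {p q : ℝ} (hpq : p < q) (hsub : Ioo p q ⊆ D) (hp : p ∉ D) (hq : q ∉ D) :
    closure D ∩ Ioo (q - 2 * π) (p + 2 * π) ⊆ Icc p q := by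
  -- an interval in `D` starting at the midpoint of `(p, q)` cannot cross `p` or `q`
  have hinter : D ∩ Ioo (q - 2 * π) (p + 2 * π) ⊆ Ioo p q := by
    rintro ψ ⟨hψ, hψ₁, hψ₂⟩
    have hmid : (p + q) / 2 ∈ Ioo p q := ⟨by linarith, by linarith⟩
    obtain ⟨k, hk⟩ := hD _ (hsub hmid) ψ hψ
    have hkp : p < ψ + k • (2 * π) := by
      by_contra! h
      exact hp (hk ⟨min_le_right _ _ |>.trans h, hmid.1.le.trans (le_max_left _ _)⟩)
    have hkq : ψ + k • (2 * π) < q := by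
      by_contra! h
      exact hq (hk ⟨(min_le_left _ _).trans hmid.2.le, h.trans (le_max_right _ _)⟩)
    rw [zsmul_eq_mul] at hkp hkq
    have hk0 : k = 0 := by
      have h₁ : (k : ℝ) < 1 := by nlinarith [pi_pos]
      have h₂ : (-1 : ℝ) < k := by nlinarith [pi_pos]
      have : k < 1 ∧ -1 < k := ⟨by exact_mod_cast h₁, by exact_mod_cast h₂⟩
      omega
    simpa [hk0] using And.intro hkp hkq
  calc closure D ∩ Ioo (q - 2 * π) (p + 2 * π)
      ⊆ closure (Ioo (q - 2 * π) (p + 2 * π) ∩ D) := by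
        rw [inter_comm]; exact isOpen_Ioo.inter_closure
    _ ⊆ Icc p q := by
        rw [inter_comm]
        exact (closure_mono hinter).trans (closure_Ioo hpq.ne).le

lemma eq_of_Ioo_subset_Icc_union {l r p₁ q₁ p₂ q₂ : ℝ} (h₁ : l ≤ p₁) (h₂ : p₁ < q₁)
    (h₃ : q₁ ≤ p₂) (h₄ : p₂ < q₂) (h₅ : q₂ ≤ r) (hcov : Ioo l r ⊆ Icc p₁ q₁ ∪ Icc p₂ q₂) :
    l = p₁ ∧ q₁ = p₂ ∧ q₂ = r := by
  have gap : ∀ x, l < x → x < r → (x < p₁ ∨ q₁ < x) → (x < p₂ ∨ q₂ < x) → False := by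
    intro x hlx hxr hx₁ hx₂
    rcases hcov ⟨hlx, hxr⟩ with ⟨hx, hx'⟩ | ⟨hx, hx'⟩
    · rcases hx₁ with h | h <;> linarith
    · rcases hx₂ with h | h <;> linarith
  refine ⟨h₁.antisymm ?_, h₃.antisymm ?_, h₅.antisymm ?_⟩ <;> by_contra! h
  · exact gap ((l + p₁) / 2) (by linarith) (by linarith) (by left; linarith) (by left; linarith)
  · exact gap ((q₁ + p₂) / 2) (by linarith) (by linarith) (by right; linarith) (by left; linarith)
  · exact gap ((q₂ + r) / 2) (by linarith) (by linarith) (by right; linarith) (by right; linarith)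

/-- `A` is the lift to `ℝ` of a regular closed subset of the circle with connected interior. -/
structure IsAngularRegion (A : Set ℝ) : Prop where
  closure_interior : closure (interior A) = A
  periodic : Periodic (· ∈ A) (2 * π)
  nonempty : (interior A).Nonempty
  circleConnected : IsCircleConnected (interior A)

namespace IsAngularRegion

variable {A A₀ B : Set ℝ}

lemma Icc_subset (hA : IsAngularRegion A) {p q : ℝ} (hpq : p < q) (hsub : Ioo p q ⊆ interior A) :
    Icc p q ⊆ A := by
  rw [← hA.closure_interior, ← closure_Ioo hpq.ne]
  exact closure_mono hsub

lemma inter_Ioo_subset (hA : IsAngularRegion A) {p q : ℝ} (hpq : p < q)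
    (hsub : Ioo p q ⊆ interior A) (hp : p ∉ interior A) (hq : q ∉ interior A) :
    A ∩ Ioo (q - 2 * π) (p + 2 * π) ⊆ Icc p q := by
  conv_lhs => rw [← hA.closure_interior]
  exact hA.circleConnected.closure_inter_Ioo_subset hpq hsub hp hq

lemma exists_arc_in_gap (hA : IsAngularRegion A) (hper₀ : Periodic (· ∈ A₀) (2 * π))
    (hdisj : Disjoint (interior A) A₀) {p q : ℝ} (hpq : p < q) (hA₀ : Icc p q ⊆ A₀) :
    ∃ p' q', q ≤ p' ∧ p' < q' ∧ q' ≤ p + 2 * π ∧ Icc p' q' ⊆ A ∧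
      A ∩ Ioo q (p + 2 * π) ⊆ Icc p' q' := by
  have notMem : ∀ x ∈ A₀, x ∉ interior A := fun x hx hxA => disjoint_left.mp hdisj hxA hx
  obtain ⟨η₀, hη₀⟩ := hA.nonempty
  obtain ⟨η, hηI, hη⟩ := hA.periodic.mem_interior.exists_mem_Ico two_pi_pos η₀ q
  have hηA : η ∈ interior A := hη ▸ hη₀
  have hq₀ : q ∈ A₀ := hA₀ ⟨hpq.le, le_rfl⟩
  have hp₀ : p + 2 * π ∈ A₀ := (hper₀ p).mpr (hA₀ ⟨le_rfl, hpq.le⟩)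
  have hqη : q < η := lt_of_le_of_ne hηI.1 fun h => notMem q hq₀ (h ▸ hηA)
  have hηp : η < p + 2 * π := by
    by_contra! h
    have : η - 2 * π ∈ A₀ := hA₀ ⟨by linarith, by linarith [hηI.2]⟩
    exact notMem η (by simpa using (hper₀ (η - 2 * π)).mpr this) hηA
  obtain ⟨p', q', hqp', hp'η, hηq', hq'p, hsub, hp', hq'⟩ :=
    exists_Ioo_subset_of_notMem isOpen_interior hηA (notMem q hq₀) (notMem _ hp₀) hqη.le hηp.le
  refine ⟨p', q', hqp', hp'η.trans hηq', hq'p, hA.Icc_subset (hp'η.trans hηq') hsub, ?_⟩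
  rintro x ⟨hxA, hxW⟩
  exact hA.inter_Ioo_subset (hp'η.trans hηq') hsub hp' hq'
    ⟨hxA, by linarith [hxW.1], by linarith [hxW.2]⟩

lemma exists_arc_with_gap (hA : IsAngularRegion A) (hB : IsAngularRegion B)
    (hdisj : Disjoint (interior A) B) :
    ∃ p q, p < q ∧ Icc p q ⊆ A ∧ ∀ x ∈ Ioo q (p + 2 * π), x ∉ A := by
  obtain ⟨θ, hθ⟩ := hA.nonempty
  obtain ⟨ξ₀, hξ₀⟩ := hB.nonempty
  obtain ⟨ξ, hξI, hξ⟩ := hB.periodic.mem_interior.exists_mem_Ico two_pi_pos ξ₀ (θ - 2 * π)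
  have notMem : ∀ x ∈ interior B, x ∉ interior A := fun x hx hxA =>
    disjoint_left.mp hdisj hxA (interior_subset hx)
  have hξB : ξ ∈ interior B := hξ ▸ hξ₀
  have hξB' : ξ + 2 * π ∈ interior B := (hB.periodic.mem_interior ξ).mpr hξB
  obtain ⟨p, q, -, hpθ, hθq, -, hsub, hp, hq⟩ := exists_Ioo_subset_of_notMem isOpen_interior
    hθ (notMem ξ hξB) (notMem _ hξB') (by linarith [hξI.2]) (by linarith [hξI.1])
  have hpq : p < q := hpθ.trans hθq
  refine ⟨p, q, hpq, hA.Icc_subset hpq hsub, fun x hx hxA => ?_⟩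
  have := hA.inter_Ioo_subset hpq hsub hp hq ⟨hxA, by linarith [hx.1, pi_pos], hx.2⟩
  exact this.2.not_gt hx.1

end IsAngularRegion

theorem exists_consecutive_arcs {A : Fin 3 → Set ℝ} (hA : ∀ i, IsAngularRegion (A i))
    (hdisj : ∀ i j, i ≠ j → Disjoint (interior (A i)) (A j)) (hcover : ∀ θ, ∃ i, θ ∈ A i) :
    ∃ (a b c : ℝ) (τ : Equiv.Perm (Fin 3)), a < b ∧ b < c ∧ c < a + 2 * π ∧
      Icc a b ⊆ A (τ 0) ∧ Icc b c ⊆ A (τ 1) ∧ Icc c (a + 2 * π) ⊆ A (τ 2) := by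
  obtain ⟨p, q, hpq, hA₀, hgap⟩ := (hA 0).exists_arc_with_gap (hA 1) (hdisj 0 1 (by decide))
  obtain ⟨p₁, q₁, hqp₁, hpq₁, hq₁p, hA₁, hW₁⟩ :=
    (hA 1).exists_arc_in_gap (hA 0).periodic (hdisj 1 0 (by decide)) hpq hA₀
  obtain ⟨p₂, q₂, hqp₂, hpq₂, hq₂p, hA₂, hW₂⟩ :=
    (hA 2).exists_arc_in_gap (hA 0).periodic (hdisj 2 0 (by decide)) hpq hA₀
  have hW : Ioo q (p + 2 * π) ⊆ Icc p₁ q₁ ∪ Icc p₂ q₂ := fun x hx => by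
    obtain ⟨i, hi⟩ := hcover x
    fin_cases i
    exacts [absurd hi (hgap x hx), Or.inl (hW₁ ⟨hi, hx⟩), Or.inr (hW₂ ⟨hi, hx⟩)]
  have horder : q₁ ≤ p₂ ∨ q₂ ≤ p₁ := by
    by_contra! h
    have hm₁ : (max p₁ p₂ + min q₁ q₂) / 2 ∈ interior (A 1) :=
      interior_mono hA₁ (by rw [interior_Icc]; exact ⟨by grind, by grind⟩)
    exact disjoint_left.mp (hdisj 1 2 (by decide)) hm₁ (hA₂ ⟨by grind, by grind⟩)
  rcases horder with h | h
  · obtain ⟨e₁, e₂, e₃⟩ := eq_of_Ioo_subset_Icc_union hqp₁ hpq₁ h hpq₂ hq₂p hW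
    subst e₁ e₂ e₃
    exact ⟨p, q, q₁, 1, hpq, hpq₁, hpq₂, hA₀, hA₁, hA₂⟩
  · obtain ⟨e₁, e₂, e₃⟩ := eq_of_Ioo_subset_Icc_union hqp₂ hpq₂ h hpq₁ hq₁p
      (hW.trans (union_comm _ _).le)
    subst e₁ e₂ e₃
    exact ⟨p, q, q₂, Equiv.swap 1 2, hpq, hpq₂, hpq₁, hA₀, hA₂, hA₁⟩

def toE2 : ℂ ≃L[ℝ] E2 :=
  Complex.equivRealProdCLM.trans (ContinuousLinearEquiv.finTwoArrow ℝ ℝ).symm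

def unitVec (θ : ℝ) : E2 := ![cos θ, sin θ]

lemma unitVec_periodic : Periodic unitVec (2 * π) := fun θ => by
  simp only [unitVec, cos_add_two_pi, sin_add_two_pi]

lemma toE2_exp (w : ℂ) : toE2 (Complex.exp w) = Real.exp w.re • unitVec w.im := by
  ext i
  fin_cases i
  · exact Complex.exp_re w
  · exact Complex.exp_im w

/-- Polar coordinates centred at `v`, with `w.re` the logarithm of the radius and `w.im` the
angle. -/
def polarMap (v : E2) (w : ℂ) : E2 := v + toE2 (Complex.exp w)

lemma polarMap_apply (v : E2) (w : ℂ) : polarMap v w = v + Real.exp w.re • unitVec w.im := by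
  rw [polarMap, toE2_exp]

lemma polarMap_mul_I (v : E2) (θ : ℝ) : polarMap v (θ * Complex.I) = v + unitVec θ := by
  simp [polarMap_apply]

lemma continuous_polarMap (v : E2) : Continuous (polarMap v) :=
  continuous_const.add (toE2.continuous.comp Complex.continuous_exp)

lemma isOpenMap_polarMap (v : E2) : IsOpenMap (polarMap v) :=
  (isOpenMap_add_left v).comp (toE2.toHomeomorph.isOpenMap.comp Complex.isOpenMap_exp)

lemma exists_polarMap_eq {v x : E2} (hx : x ≠ v) : ∃ w, polarMap v w = x := by
  refine ⟨Complex.log (toE2.symm (x - v)), ?_⟩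
  rw [polarMap, Complex.exp_log (by simpa [sub_eq_zero] using hx),
    ContinuousLinearEquiv.apply_symm_apply, add_sub_cancel]

def angularSet (v : E2) (P : Set E2) : Set ℝ := {θ | v + unitVec θ ∈ P}

namespace IsConeWithApex

variable {v : E2} {P : Set E2}

lemma add_smul_mem_iff (hP : IsConeWithApex v P) {t : ℝ} (ht : 0 < t) (u : E2) :
    v + t • u ∈ P ↔ v + u ∈ P := by
  refine ⟨fun h => ?_, fun h => by simpa using hP _ h t ht.le⟩
  simpa [smul_smul, inv_mul_cancel₀ ht.ne'] using hP _ h t⁻¹ (inv_nonneg.mpr ht.le)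

lemma preimage_polarMap (hP : IsConeWithApex v P) :
    polarMap v ⁻¹' P = Complex.im ⁻¹' angularSet v P := by
  ext w
  rw [mem_preimage, polarMap_apply]
  exact hP.add_smul_mem_iff (Real.exp_pos _) _

lemma preimage_polarMap_interior (hP : IsConeWithApex v P) :
    polarMap v ⁻¹' interior P = Complex.im ⁻¹' interior (angularSet v P) := by
  rw [(isOpenMap_polarMap v).preimage_interior_eq_interior_preimage (continuous_polarMap v),
    hP.preimage_polarMap, Complex.interior_preimage_im]

lemma mem_interior_iff (hP : IsConeWithApex v P) {θ : ℝ} :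
    v + unitVec θ ∈ interior P ↔ θ ∈ interior (angularSet v P) := by
  rw [← polarMap_mul_I, ← mem_preimage, hP.preimage_polarMap_interior]
  simp

lemma closure_interior_angularSet (hP : IsConeWithApex v P) (hreg : P = closure (interior P)) :
    closure (interior (angularSet v P)) = angularSet v P := by
  apply Complex.im_surjective.preimage_injective
  rw [← Complex.closure_preimage_im, ← hP.preimage_polarMap_interior,
    ← (isOpenMap_polarMap v).preimage_closure_eq_closure_preimage (continuous_polarMap v),
    ← hreg, hP.preimage_polarMap]

lemma nonempty_interior_angularSet (hP : IsConeWithApex v P) (hne : (interior P).Nonempty)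
    (hv : v ∉ interior P) : (interior (angularSet v P)).Nonempty := by
  obtain ⟨x, hx⟩ := hne
  obtain ⟨w, rfl⟩ := exists_polarMap_eq (ne_of_mem_of_not_mem hx hv)
  rw [← mem_preimage, hP.preimage_polarMap_interior] at hx
  exact ⟨w.im, hx⟩

lemma isCircleConnected_interior_angularSet (hP : IsConeWithApex v P)
    (hconn : IsConnected (interior P)) (hv : v ∉ interior P) :
    IsCircleConnected (interior (angularSet v P)) := by
  intro θ hθ θ' hθ'
  rw [← hP.mem_interior_iff] at hθ hθ'
  -- the imaginary part of the lift through `exp` of a path in `interior P` is a continuous angle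
  let γ := ((isOpen_interior.isConnected_iff_isPathConnected.mp hconn).joinedIn _ hθ _ hθ')
  have hγv : ∀ t, toE2.symm (γ.somePath t - v) ≠ 0 := fun t => by
    simpa [sub_eq_zero] using ne_of_mem_of_not_mem (γ.somePath_mem t) hv
  let δ : C(unitInterval, {z : ℂ // z ≠ 0}) :=
    ⟨fun t => ⟨_, hγv t⟩, by fun_prop⟩
  obtain ⟨Γ, hΓ, hΓ0⟩ := Complex.isCoveringMap_exp.exists_path_lifts δ (θ * Complex.I) (by
    ext; simp [δ, ← polarMap_mul_I, polarMap])
  have hexp : ∀ t, polarMap v (Γ t) = γ.somePath t := fun t => by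
    have := congrArg Subtype.val (congrFun hΓ t)
    simp only [Function.comp_apply, δ, ContinuousMap.coe_mk] at this
    simp [polarMap, this]
  have hrange : range (Complex.im ∘ Γ) ⊆ interior (angularSet v P) := by
    rintro _ ⟨t, rfl⟩
    have := γ.somePath_mem t
    rwa [← hexp, ← mem_preimage, hP.preimage_polarMap_interior] at this
  obtain ⟨n, hn⟩ := Complex.exp_eq_exp_iff_exists_int.mp (show Complex.exp (Γ 1) =
      Complex.exp (θ' * Complex.I) by
    apply toE2.injective
    have := hexp 1
    simp only [polarMap, Path.target] at this
    rw [← add_right_inj v, this, ← polarMap, polarMap_mul_I])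
  refine ⟨n, Subset.trans ?_ hrange⟩
  have h₀ : θ ∈ range (Complex.im ∘ Γ) := ⟨0, by simp [hΓ0]⟩
  have h₁ : θ' + n • (2 * π) ∈ range (Complex.im ∘ Γ) := ⟨1, by simp [hn]⟩
  exact (isPreconnected_range (Complex.continuous_im.comp Γ.continuous)).ordConnected.uIcc_subset
    h₀ h₁

lemma isAngularRegion (hP : IsConeWithApex v P) (hreg : P = closure (interior P))
    (hconn : IsConnected (interior P)) (hv : v ∉ interior P) :
    IsAngularRegion (angularSet v P) where
  closure_interior := hP.closure_interior_angularSet hreg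
  periodic θ := congrArg (v + · ∈ P) (unitVec_periodic θ)
  nonempty := hP.nonempty_interior_angularSet hconn.nonempty hv
  circleConnected := hP.isCircleConnected_interior_angularSet hconn hv

end IsConeWithApex

def IsAffineOnRays (v : E2) (F : E2 → ℝ) : Prop :=
  ∀ u (t : ℝ), 0 ≤ t → F (v + t • u) = F v + t * (F (v + u) - F v)

lemma IsAffineFn.isAffineOnRays {g : E2 → ℝ} (hg : IsAffineFn g) (v : E2) :
    IsAffineOnRays v g := by
  obtain ⟨a, b, hab⟩ := hg
  intro u t _
  simp only [hab, dotProduct_add, dotProduct_smul, smul_eq_mul]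
  ring

lemma isAffineOnRays_of_cones {v : E2} {f : E2 → ℝ} {P : Fin 3 → Set E2}
    {F : Fin 3 → E2 → ℝ} (hcone : ∀ i, IsConeWithApex v (P i)) (hcover : ∀ x, ∃ i, x ∈ P i)
    (hF : ∀ i, IsAffineFn (F i)) (hf : ∀ i, EqOn f (F i) (P i)) (hv : ∀ i, v ∈ P i) :
    IsAffineOnRays v f := by
  intro u t ht
  obtain ⟨i, hi⟩ := hcover (v + u)
  have hti : v + t • u ∈ P i := by simpa using hcone i _ hi t ht
  rw [hf i hti, hf i hi, hf i (hv i), (hF i).isAffineOnRays v u t ht]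

lemma IsAffineFn.exists_sub_eq_mul_sin {g g' : E2 → ℝ} (hg : IsAffineFn g) (hg' : IsAffineFn g')
    {v : E2} (hv : g v = g' v) {z : ℝ} (hz : g (v + unitVec z) = g' (v + unitVec z)) :
    ∃ K, ∀ θ, g (v + unitVec θ) - g' (v + unitVec θ) = K * sin (θ - z) := by
  obtain ⟨a, b, hab⟩ := hg
  obtain ⟨a', b', hab'⟩ := hg'
  have key : ∀ θ, g (v + unitVec θ) - g' (v + unitVec θ) =
      (a 0 - a' 0) * cos θ + (a 1 - a' 1) * sin θ := fun θ => by
    have := hv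
    simp only [hab, hab', dotProduct, Fin.sum_univ_two, unitVec, Pi.add_apply,
      Matrix.cons_val_zero, Matrix.cons_val_one] at this ⊢
    linarith
  obtain ⟨K, hK⟩ := exists_mul_sin_sub ((key z).symm.trans (sub_eq_zero.mpr hz))
  exact ⟨K, fun θ => (key θ).trans (hK θ)⟩

lemma IsMaxMinForm.of_comp_unitVec {v : E2} {h p q r : E2 → ℝ} (hh : IsAffineOnRays v h)
    (hp : IsAffineOnRays v p) (hq : IsAffineOnRays v q) (hr : IsAffineOnRays v r)
    (hpv : p v = h v) (hqv : q v = h v) (hrv : r v = h v)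
    (H : IsMaxMinForm (fun θ => h (v + unitVec θ)) (fun θ => p (v + unitVec θ))
      (fun θ => q (v + unitVec θ)) (fun θ => r (v + unitVec θ))) :
    IsMaxMinForm h p q r := by
  refine H.of_monotone fun x => ?_
  rcases eq_or_ne x v with rfl | hx
  · exact ⟨0, fun _ => h x, monotone_const, rfl, hpv, hqv, hrv⟩
  obtain ⟨w, rfl⟩ := exists_polarMap_eq hx
  have ht := Real.exp_pos w.re
  refine ⟨w.im, fun y => h v + Real.exp w.re * (y - h v),
    fun y y' hy => by dsimp only; nlinarith, ?_, ?_, ?_, ?_⟩ <;>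
    simp only [polarMap_apply, hh _ _ ht.le, hp _ _ ht.le, hq _ _ ht.le, hr _ _ ht.le, hpv, hqv, hrv]

lemma exists_threeArcs_of_affine {v : E2} {f : E2 → ℝ} {G : Fin 3 → E2 → ℝ}
    (hG : ∀ i, IsAffineFn (G i)) (hGv : ∀ i, G i v = f v) {a b c : ℝ} (hab : a < b)
    (hbc : b < c) (hca : c < a + 2 * π)
    (e₀ : ∀ θ ∈ Icc a b, f (v + unitVec θ) = G 0 (v + unitVec θ))
    (e₁ : ∀ θ ∈ Icc b c, f (v + unitVec θ) = G 1 (v + unitVec θ))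
    (e₂ : ∀ θ ∈ Icc c (a + 2 * π), f (v + unitVec θ) = G 2 (v + unitVec θ)) :
    ∃ K, ThreeArcs (fun θ => f (v + unitVec θ)) (fun i θ => G i (v + unitVec θ)) a b c K := by
  have hper : ∀ F : E2 → ℝ, Periodic (fun θ => F (v + unitVec θ)) (2 * π) := fun F θ =>
    congrArg (F <| v + ·) (unitVec_periodic θ)
  have hGv' : ∀ i j, G i v = G j v := fun i j => (hGv i).trans (hGv j).symm
  obtain ⟨K₀, hK₀⟩ := (hG 0).exists_sub_eq_mul_sin (hG 1) (hGv' 0 1)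
    ((e₀ b ⟨hab.le, le_rfl⟩).symm.trans (e₁ b ⟨le_rfl, hbc.le⟩))
  obtain ⟨K₁, hK₁⟩ := (hG 1).exists_sub_eq_mul_sin (hG 2) (hGv' 1 2)
    ((e₁ c ⟨hbc.le, le_rfl⟩).symm.trans (e₂ c ⟨le_rfl, hca.le⟩))
  obtain ⟨K₂, hK₂⟩ := (hG 2).exists_sub_eq_mul_sin (hG 0) (hGv' 2 0) (z := a) (by
    have h₂ := e₂ (a + 2 * π) ⟨hca.le, le_rfl⟩
    rw [unitVec_periodic a] at h₂
    exact h₂.symm.trans (e₀ a ⟨le_rfl, hab.le⟩))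
  exact ⟨![K₀, K₁, K₂], hab, hbc, hca, hper f, fun i => hper (G i), e₀, e₁, e₂, hK₀, hK₁, hK₂⟩

theorem isNestedMaxMin_of_cones {v : E2} {f : E2 → ℝ} {P : Fin 3 → Set E2}
    {F : Fin 3 → E2 → ℝ} (hreg : ∀ i, P i = closure (interior (P i)))
    (hconn : ∀ i, IsConnected (interior (P i))) (hcone : ∀ i, IsConeWithApex v (P i))
    (hdisj : ∀ i j, i ≠ j → Disjoint (interior (P i)) (P j)) (hcover : ∀ x, ∃ i, x ∈ P i)
    (hF : ∀ i, IsAffineFn (F i)) (hf : ∀ i, EqOn f (F i) (P i)) : IsNestedMaxMin f F := by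
  have hv : ∀ i, v ∈ P i := fun i => by
    obtain ⟨x, hx⟩ := (hconn i).nonempty
    simpa using hcone i x (interior_subset hx) 0 le_rfl
  have hvint : ∀ i, v ∉ interior (P i) := fun i hi =>
    disjoint_left.mp (hdisj i (i + 1) (by fin_cases i <;> decide)) hi (hv _)
  have hA : ∀ i, IsAngularRegion (angularSet v (P i)) := fun i =>
    (hcone i).isAngularRegion (hreg i) (hconn i) (hvint i)
  have hdisjA : ∀ i j, i ≠ j → Disjoint (interior (angularSet v (P i))) (angularSet v (P j)) :=
    fun i j hij => disjoint_left.mpr fun _ hθ hθ' =>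
      disjoint_left.mp (hdisj i j hij) ((hcone i).mem_interior_iff.mpr hθ) hθ'
  obtain ⟨a, b, c, τ, hab, hbc, hca, h₀, h₁, h₂⟩ :=
    exists_consecutive_arcs hA hdisjA fun θ => hcover (v + unitVec θ)
  have hfv : ∀ i, F i v = f v := fun i => (hf i (hv i)).symm
  obtain ⟨K, H⟩ := exists_threeArcs_of_affine (G := F ∘ τ) (fun i => hF _) (fun i => hfv _)
    hab hbc hca (fun θ hθ => hf _ (h₀ hθ)) (fun θ hθ => hf _ (h₁ hθ)) (fun θ hθ => hf _ (h₂ hθ))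
  obtain ⟨τ', hτ'⟩ := H.isNestedMaxMin
  have hrays := isAffineOnRays_of_cones hcone hcover hF hf hv
  exact ⟨τ * τ', hτ'.of_comp_unitVec hrays ((hF _).isAffineOnRays v) ((hF _).isAffineOnRays v)
    ((hF _).isAffineOnRays v) (hfv _) (hfv _) (hfv _)⟩

lemma IsAdmissible.disjoint_interior {f : E2 → ℝ} {Ps : Finset (Set E2)} (h : IsAdmissible f Ps)
    {P Q : Set E2} (hP : P ∈ Ps) (hQ : Q ∈ Ps) (hPQ : P ≠ Q) : Disjoint (interior P) Q := by
  refine disjoint_left.mpr fun x hxP hxQ => ?_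
  have hx : x ∈ frontier P := (h.2.2.1 P hP Q hQ hPQ ▸ ⟨interior_subset hxP, hxQ⟩ :
    x ∈ frontier P ∩ frontier Q).1
  rw [(h.1 P hP).1.frontier_eq] at hx
  exact hx.2 hxP

lemma IsAdmissible.exists_mem {f : E2 → ℝ} {Ps : Finset (Set E2)} (h : IsAdmissible f Ps)
    (x : E2) : ∃ P ∈ Ps, x ∈ P := by
  have hx : x ∈ ⋃ P ∈ Ps, P := h.2.1 ▸ mem_univ x
  simpa using hx

theorem vFunction_three_pieces_max_general (v : E2) (f : E2 → ℝ) (P₀ P₁ P₂ : Set E2)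
    (f₀ f₁ f₂ : E2 → ℝ)
    (hne₀₁ : P₀ ≠ P₁) (hne₀₂ : P₀ ≠ P₂) (hne₁₂ : P₁ ≠ P₂)
    (Ps : Finset (Set E2)) (hPs : (Ps : Set (Set E2)) = {P₀, P₁, P₂})
    (hadm : IsAdmissible f Ps)
    (hcone : ∀ P ∈ Ps, IsConeWithApex v P)
    (haff₀ : IsAffineFn f₀) (haff₁ : IsAffineFn f₁) (haff₂ : IsAffineFn f₂)
    (hcomp₀ : EqOn f f₀ P₀) (hcomp₁ : EqOn f f₁ P₁) (hcomp₂ : EqOn f f₂ P₂) :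
    ∃ σ₁ σ₂ : ℝ, (σ₁ = 1 ∨ σ₁ = -1) ∧ (σ₂ = 1 ∨ σ₂ = -1) ∧
      ∃ g₁ g₂ g₃ : E2 → ℝ,
        g₁ ∈ ({f₀, f₁, f₂, -f₀, -f₁, -f₂} : Set (E2 → ℝ)) ∧
        g₂ ∈ ({f₀, f₁, f₂, -f₀, -f₁, -f₂} : Set (E2 → ℝ)) ∧
        g₃ ∈ ({f₀, f₁, f₂, -f₀, -f₁, -f₂} : Set (E2 → ℝ)) ∧
        ∀ x, f x = σ₁ * max (g₁ x) (σ₂ * max (g₂ x) (g₃ x)) := by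
  let P : Fin 3 → Set E2 := ![P₀, P₁, P₂]
  let F : Fin 3 → E2 → ℝ := ![f₀, f₁, f₂]
  have hmem : ∀ i, P i ∈ Ps := fun i => by
    rw [← Finset.mem_coe, hPs]; fin_cases i <;> simp [P]
  have hne : ∀ i j, i ≠ j → P i ≠ P j := by
    intro i j hij
    fin_cases i <;> fin_cases j <;> simp_all [P, eq_comm]
  have hcover : ∀ x, ∃ i, x ∈ P i := fun x => by
    obtain ⟨Q, hQ, hx⟩ := hadm.exists_mem x
    rw [← Finset.mem_coe, hPs] at hQ
    rcases hQ with rfl | rfl | rfl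
    exacts [⟨0, hx⟩, ⟨1, hx⟩, ⟨2, hx⟩]
  obtain ⟨τ, hτ⟩ := isNestedMaxMin_of_cones (F := F) (fun i => (hadm.1 _ (hmem i)).2.2.2.1)
    (fun i => (hadm.1 _ (hmem i)).2.2.1) (fun i => hcone _ (hmem i))
    (fun i j hij => hadm.disjoint_interior (hmem i) (hmem j) (hne i j hij)) hcover
    (fun i => by fin_cases i <;> assumption) (fun i => by fin_cases i <;> assumption)
  have hS : ∀ i, F i ∈ ({f₀, f₁, f₂, -f₀, -f₁, -f₂} : Set (E2 → ℝ)) ∧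
      -F i ∈ ({f₀, f₁, f₂, -f₀, -f₁, -f₂} : Set (E2 → ℝ)) := by
    intro i; fin_cases i <;> simp [F]
  exact hτ.exists_signed_max (hS _) (hS _) (hS _)

/-- Every `v`-function with exactly three pieces `P₀, P₁, P₂` with affine
components `f₀, f₁, f₂` is a signed nested maximum of (signed) affine components. -/
theorem vFunction_three_pieces_max (v : E2) (f : E2 → ℝ) (P₀ P₁ P₂ : Set E2)
    (f₀ f₁ f₂ : E2 → ℝ)
    (hcont : Continuous f)
    (hne₀₁ : P₀ ≠ P₁) (hne₀₂ : P₀ ≠ P₂) (hne₁₂ : P₁ ≠ P₂)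
    (Ps : Finset (Set E2)) (hPs : (Ps : Set (Set E2)) = {P₀, P₁, P₂})
    (hadm : IsAdmissible f Ps)
    (hcone : ∀ P ∈ Ps, IsConeWithApex v P)
    (haff₀ : IsAffineFn f₀) (haff₁ : IsAffineFn f₁) (haff₂ : IsAffineFn f₂)
    (hcomp₀ : EqOn f f₀ P₀) (hcomp₁ : EqOn f f₁ P₁) (hcomp₂ : EqOn f f₂ P₂) :
    ∃ σ₁ σ₂ : ℝ, (σ₁ = 1 ∨ σ₁ = -1) ∧ (σ₂ = 1 ∨ σ₂ = -1) ∧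
      ∃ g₁ g₂ g₃ : E2 → ℝ,
        g₁ ∈ ({f₀, f₁, f₂, -f₀, -f₁, -f₂} : Set (E2 → ℝ)) ∧
        g₂ ∈ ({f₀, f₁, f₂, -f₀, -f₁, -f₂} : Set (E2 → ℝ)) ∧
        g₃ ∈ ({f₀, f₁, f₂, -f₀, -f₁, -f₂} : Set (E2 → ℝ)) ∧
        ∀ x, f x = σ₁ * max (g₁ x) (σ₂ * max (g₂ x) (g₃ x)) :=
  vFunction_three_pieces_max_general v f P₀ P₁ P₂ f₀ f₁ f₂ hne₀₁ hne₀₂ hne₁₂ Ps hPs hadm hcone haff₀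
    haff₁ haff₂ hcomp₀ hcomp₁ hcomp₂
end
end

section
/- Let p ≥ 3 and let f : ℝ² → ℝ be CPL with p pieces, with an admissible family of cone pieces P₁, …, P_p such that P₁ ∩ P₂ contains a line segment with two distinct endpoints (P₁ and P₂ are adjacent) and such that there is a linear functional ℓ : ℝ² → ℝ with ℓ(x) > 0 for all x ∈ (P₁ ∪ P₂) \ {0} (P₁ and P₂ enclose an angle less than π). Then there exists a function f′ : ℝ² → ℝ that is CPL with at most 3 pieces such that f − f′ is CPL with at most p − 1 pieces. -/
open Set

noncomputable section

/-!
Each of `P₁`, `P₂` is a closed cone lying in the open half-plane `{ℓ > 0}` (plus the apex). Cutting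
its connected interior by an affine line transversal to the rays gives a bounded open interval, so
the piece is a convex sector. Two such sectors with disjoint interiors and a common boundary ray
merge into a convex sector `S = P₁ ∪ P₂` of angle less than `π`. Let `G` be the linear function
agreeing with `f` on the two boundary rays of `S`. Then `f' := 1_S · (f - G)` is continuous and CPL
on the three pieces `P₁`, `P₂`, `closure Sᶜ`, while `f - f'` is `G` on `S` and `f` off `interior S`,
hence CPL on `S` and the `p - 2` remaining pieces.
-/

open Filter Topology Pointwise

theorem LinearMap.isLinearFn (φ : E2 →ₗ[ℝ] ℝ) : IsLinearFn φ := by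
  classical
  refine ⟨fun i => φ fun j => if i = j then 1 else 0, fun x => ?_⟩
  rw [φ.pi_apply_eq_sum_univ x, dotProduct]
  simp only [smul_eq_mul, mul_comm]

theorem IsLinearFn.exists_linearMap {f : E2 → ℝ} (hf : IsLinearFn f) :
    ∃ φ : E2 →ₗ[ℝ] ℝ, ⇑φ = f := by
  obtain ⟨a, ha⟩ := hf
  exact ⟨⟨⟨(a ⬝ᵥ ·), dotProduct_add a⟩, fun c x => dotProduct_smul c a x⟩,
    funext fun x => (ha x).symm⟩

theorem IsLinearFn.isAffineFn {f : E2 → ℝ} (hf : IsLinearFn f) : IsAffineFn f :=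
  let ⟨a, ha⟩ := hf
  ⟨a, 0, fun x => by rw [ha, add_zero]⟩

theorem IsCPL.mono {p q : ℕ} {f : E2 → ℝ} (hf : IsCPL p f) (hpq : p ≤ q) : IsCPL q f :=
  let ⟨hc, Ps, hcard, h⟩ := hf
  ⟨hc, Ps, hcard.trans hpq, h⟩

theorem isConeWithApex_zero_iff {P : Set E2} :
    IsConeWithApex 0 P ↔ ∀ x ∈ P, ∀ t : ℝ, 0 ≤ t → t • x ∈ P := by
  simp [IsConeWithApex]

theorem IsConeWithApex.union {P Q : Set E2} (hP : IsConeWithApex 0 P) (hQ : IsConeWithApex 0 Q) :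
    IsConeWithApex 0 (P ∪ Q) := by
  rintro x (hx | hx) t ht
  exacts [Or.inl (hP x hx t ht), Or.inr (hQ x hx t ht)]

theorem IsConeWithApex.smul_mem_interior {P : Set E2} (hP : IsConeWithApex 0 P) {t : ℝ}
    (ht : 0 < t) {x : E2} (hx : x ∈ interior P) : t • x ∈ interior P := by
  have hsub : t • P ⊆ P := by
    rintro _ ⟨y, hy, rfl⟩
    exact isConeWithApex_zero_iff.1 hP y hy t ht.le
  exact interior_mono hsub (interior_smul₀ ht.ne' P ▸ smul_mem_smul_set hx)

theorem IsConeWithApex.eq_univ_of_zero_mem_interior {P : Set E2} (hP : IsConeWithApex 0 P)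
    (h0 : (0 : E2) ∈ interior P) : P = univ := by
  refine eq_univ_of_forall fun y => ?_
  have hlim : Tendsto (fun t : ℝ => t • y) (𝓝[>] 0) (𝓝 0) := by
    simpa using (tendsto_id.smul_const y).mono_left (nhdsWithin_le_nhds (a := (0 : ℝ)))
  obtain ⟨t, hty, ht⟩ :=
    ((hlim.eventually (mem_interior_iff_mem_nhds.1 h0)).and self_mem_nhdsWithin).exists
  simpa [smul_smul, inv_mul_cancel₀ (ne_of_gt ht)] using
    isConeWithApex_zero_iff.1 hP _ hty t⁻¹ (inv_nonneg.2 (le_of_lt ht))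

theorem apply_smul_of_iUnion_eq_univ {f : E2 → ℝ} {Ps : Finset (Set E2)}
    (hcover : ⋃ P ∈ Ps, P = univ) (hcone : ∀ P ∈ Ps, IsConeWithApex 0 P)
    (hlin : ∀ P ∈ Ps, ∃ φ : E2 →ₗ[ℝ] ℝ, EqOn f φ P) (x : E2) {t : ℝ} (ht : 0 ≤ t) :
    f (t • x) = t * f x := by
  obtain ⟨P, hP, hx⟩ := iUnion₂_eq_univ_iff.1 hcover x
  obtain ⟨φ, hφ⟩ := hlin P hP
  rw [hφ hx, hφ (isConeWithApex_zero_iff.1 (hcone P hP) x hx t ht), map_smul, smul_eq_mul]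

theorem inter_eq_frontier_inter_iff_disjoint_interior {X : Type*} [TopologicalSpace X]
    {P Q : Set X} (hP : closure (interior P) = P) (hQ : closure (interior Q) = Q) :
    P ∩ Q = frontier P ∩ frontier Q ↔ Disjoint (interior P) (interior Q) := by
  have hPQ (h : Disjoint (interior P) (interior Q)) : Disjoint (interior P) Q :=
    hQ ▸ h.closure_right isOpen_interior
  have hQP (h : Disjoint (interior P) (interior Q)) : Disjoint P (interior Q) :=
    hP ▸ h.closure_left isOpen_interior
  constructor
  · refine fun h => Set.disjoint_left.2 fun x hxP hxQ => ?_
    have hx : x ∈ frontier P ∩ frontier Q := h ▸ ⟨interior_subset hxP, interior_subset hxQ⟩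
    exact hx.1.2 hxP
  · refine fun h => Subset.antisymm (fun x hx => ⟨⟨subset_closure hx.1, fun hxP => ?_⟩,
      ⟨subset_closure hx.2, fun hxQ => ?_⟩⟩) fun x hx => ?_
    · exact Set.disjoint_left.1 (hPQ h) hxP hx.2
    · exact Set.disjoint_left.1 (hQP h) hx.1 hxQ
    · exact ⟨(hP ▸ isClosed_closure : IsClosed P).frontier_subset hx.1,
        (hQ ▸ isClosed_closure : IsClosed Q).frontier_subset hx.2⟩

theorem disjoint_interior_union_left {X : Type*} [TopologicalSpace X] {P₁ P₂ Q : Set X}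
    (h₁ : closure (interior P₁) = P₁) (h₂ : closure (interior P₂) = P₂)
    (hQ : closure (interior Q) = Q) (d₁ : Disjoint (interior P₁) (interior Q))
    (d₂ : Disjoint (interior P₂) (interior Q)) : Disjoint (interior (P₁ ∪ P₂)) Q := by
  have hP : Disjoint (P₁ ∪ P₂) (interior Q) :=
    (h₁ ▸ d₁.closure_left isOpen_interior).union_left (h₂ ▸ d₂.closure_left isOpen_interior)
  exact hQ ▸ (hP.mono_left interior_subset).closure_right isOpen_interior

theorem IsPolygonalPiece.closure_interior {P : Set E2} (hP : IsPolygonalPiece P) :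
    closure (interior P) = P :=
  hP.2.2.2.1.symm

theorem IsPolygonalPiece.compl_interior {S : Set E2} (hS : IsPolygonalPiece S)
    (hc : IsConnected Sᶜ) : IsPolygonalPiece (interior S)ᶜ := by
  have hint : interior (interior S)ᶜ = Sᶜ := by rw [interior_compl, hS.closure_interior]
  obtain ⟨m, L, hL, hfr⟩ := hS.2.2.2.2
  refine ⟨isOpen_interior.isClosed_compl, hint ▸ hc.nonempty, hint ▸ hc,
    by rw [hint, closure_compl], m, L, hL, ?_⟩
  rw [frontier_compl]
  exact frontier_interior_subset.trans hfr

theorem IsAdmissible.pairwise_disjoint_interior {f : E2 → ℝ} {Ps : Finset (Set E2)}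
    (h : IsAdmissible f Ps) :
    (Ps : Set (Set E2)).Pairwise fun P Q => Disjoint (interior P) (interior Q) :=
  fun P hP Q hQ hPQ => (inter_eq_frontier_inter_iff_disjoint_interior
    (h.1 P hP).closure_interior (h.1 Q hQ).closure_interior).1 (h.2.2.1 P hP Q hQ hPQ)

theorem isCPL_of_pairwise_disjoint_interior {p : ℕ} {f : E2 → ℝ} {Ps : Finset (Set E2)}
    (hf : Continuous f) (hcard : Ps.card ≤ p) (hpoly : ∀ P ∈ Ps, IsPolygonalPiece P)
    (hcover : ∀ x, ∃ P ∈ Ps, x ∈ P)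
    (hdisj : (Ps : Set (Set E2)).Pairwise fun P Q => Disjoint (interior P) (interior Q))
    (hcone : ∀ P ∈ Ps, IsConeWithApex 0 P) (hlin : ∀ P ∈ Ps, ∃ φ : E2 →ₗ[ℝ] ℝ, EqOn f φ P) :
    IsCPL p f := by
  refine ⟨hf, Ps, hcard, ⟨hpoly, iUnion₂_eq_univ_iff.2 fun x =>
    let ⟨P, hP, hx⟩ := hcover x; ⟨P, hP, hx⟩, fun P hP Q hQ hPQ => ?_,
    fun P hP => ?_⟩, hcone, fun P hP => ?_⟩
  · exact (inter_eq_frontier_inter_iff_disjoint_interior (hpoly P hP).closure_interior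
      (hpoly Q hQ).closure_interior).2 (hdisj hP hQ hPQ)
  · obtain ⟨φ, hφ⟩ := hlin P hP
    exact ⟨φ, φ.isLinearFn.isAffineFn, hφ⟩
  · obtain ⟨φ, hφ⟩ := hlin P hP
    exact ⟨φ, φ.isLinearFn, hφ⟩

theorem card_insert_erase_erase_le {α : Type*} [DecidableEq α] {s : Finset α} {a b : α}
    (c : α) (ha : a ∈ s) (hb : b ∈ s) (hab : a ≠ b) :
    (insert c ((s.erase a).erase b)).card ≤ s.card - 1 := by
  have h₂ : 2 ≤ s.card := Finset.one_lt_card.2 ⟨a, ha, b, hb, hab⟩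
  have hcard : ((s.erase a).erase b).card = s.card - 1 - 1 := by
    rw [Finset.card_erase_of_mem (Finset.mem_erase.2 ⟨hab.symm, hb⟩), Finset.card_erase_of_mem ha]
  have := Finset.card_insert_le c ((s.erase a).erase b)
  omega

section Merge

variable {f : E2 → ℝ} {S : Set E2} {G : E2 →ₗ[ℝ] ℝ}

theorem indicator_sub_eq_zero_of_notMem_interior (hG : EqOn f G (frontier S)) {x : E2}
    (hx : x ∉ interior S) : S.indicator (fun y => f y - G y) x = 0 := by
  by_cases hxS : x ∈ S
  · rw [indicator_of_mem hxS, sub_eq_zero.2 (hG ⟨subset_closure hxS, hx⟩)]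
  · exact indicator_of_notMem hxS _

theorem continuous_indicator_sub (hf : Continuous f) (hG : EqOn f G (frontier S)) :
    Continuous (S.indicator fun x => f x - G x) :=
  continuous_indicator (fun _ hx => sub_eq_zero.2 (hG hx))
    (hf.sub (LinearMap.continuous_of_finiteDimensional G)).continuousOn

variable {P₁ P₂ : Set E2}

theorem isCPL_three_indicator_sub (hf : Continuous f) (hP₁ : IsPolygonalPiece P₁)
    (hP₂ : IsPolygonalPiece P₂) (hc₁ : IsConeWithApex 0 P₁) (hc₂ : IsConeWithApex 0 P₂)
    (hφ₁ : ∃ φ : E2 →ₗ[ℝ] ℝ, EqOn f φ P₁) (hφ₂ : ∃ φ : E2 →ₗ[ℝ] ℝ, EqOn f φ P₂)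
    (h₁₂ : Disjoint (interior P₁) (interior P₂)) (hC : IsPolygonalPiece (interior (P₁ ∪ P₂))ᶜ)
    (hCcone : IsConeWithApex 0 (interior (P₁ ∪ P₂))ᶜ) (hG : EqOn f G (frontier (P₁ ∪ P₂))) :
    IsCPL 3 ((P₁ ∪ P₂).indicator fun x => f x - G x) := by
  set C := (interior (P₁ ∪ P₂))ᶜ
  have hdisjC {P : Set E2} (hP : P ⊆ P₁ ∪ P₂) : Disjoint (interior P) (interior C) := by
    rw [interior_compl]
    exact disjoint_compl_right.mono_left ((interior_mono hP).trans subset_closure)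
  have hlin {P : Set E2} (hP : P ⊆ P₁ ∪ P₂) (hφ : ∃ φ : E2 →ₗ[ℝ] ℝ, EqOn f φ P) :
      ∃ φ : E2 →ₗ[ℝ] ℝ, EqOn ((P₁ ∪ P₂).indicator fun x => f x - G x) φ P := by
    obtain ⟨φ, hφ⟩ := hφ
    exact ⟨φ - G, fun x hx => by simp [indicator_of_mem (hP hx), hφ hx]⟩
  refine isCPL_of_pairwise_disjoint_interior (Ps := {P₁, P₂, C}) (continuous_indicator_sub hf hG)
    Finset.card_le_three (by simp [hP₁, hP₂, hC]) (fun x => ?_) ?_ (by simp [hc₁, hc₂, hCcone]) ?_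
  · by_cases hx : x ∈ interior (P₁ ∪ P₂)
    · rcases interior_subset hx with hx | hx <;> simp [hx]
    · exact ⟨C, by simp, hx⟩
  · simp only [Finset.coe_insert, Finset.coe_singleton, pairwise_insert, pairwise_singleton,
      mem_insert_iff, mem_singleton_iff, forall_eq_or_imp, forall_eq]
    have h₁ := hdisjC (subset_union_left (t := P₂))
    have h₂ := hdisjC (subset_union_right (s := P₁))
    exact ⟨⟨trivial, fun _ => ⟨h₂, h₂.symm⟩⟩, fun _ => ⟨h₁₂, h₁₂.symm⟩, fun _ => ⟨h₁, h₁.symm⟩⟩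
  · simp only [Finset.mem_insert, Finset.mem_singleton]
    rintro P (rfl | rfl | rfl)
    · exact hlin subset_union_left hφ₁
    · exact hlin subset_union_right hφ₂
    · exact ⟨0, fun x hx => indicator_sub_eq_zero_of_notMem_interior hG hx⟩

theorem isCPL_sub_indicator_sub (hf : Continuous f) {Ps : Finset (Set E2)}
    (hadm : IsAdmissible f Ps) (hcone : ∀ P ∈ Ps, IsConeWithApex 0 P)
    (hlin : ∀ P ∈ Ps, ∃ φ : E2 →ₗ[ℝ] ℝ, EqOn f φ P) (hP₁ : P₁ ∈ Ps) (hP₂ : P₂ ∈ Ps)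
    (hne : P₁ ≠ P₂) (hS : IsPolygonalPiece (P₁ ∪ P₂)) (hG : EqOn f G (frontier (P₁ ∪ P₂))) :
    IsCPL (Ps.card - 1) fun x => f x - (P₁ ∪ P₂).indicator (fun y => f y - G y) x := by
  set Rest := (Ps.erase P₁).erase P₂
  have hRest {Q : Set E2} : Q ∈ Rest ↔ Q ≠ P₂ ∧ Q ≠ P₁ ∧ Q ∈ Ps := by simp [Rest]
  have hdisj := hadm.pairwise_disjoint_interior
  have hSQ {Q : Set E2} (hQ : Q ∈ Rest) : Disjoint (interior (P₁ ∪ P₂)) Q := by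
    obtain ⟨hQ₂, hQ₁, hQ⟩ := hRest.1 hQ
    exact disjoint_interior_union_left (hadm.1 P₁ hP₁).closure_interior
      (hadm.1 P₂ hP₂).closure_interior (hadm.1 Q hQ).closure_interior
      (hdisj hP₁ hQ hQ₁.symm) (hdisj hP₂ hQ hQ₂.symm)
  have hSQ' {Q : Set E2} (hQ : Q ∈ Rest) : Disjoint (interior (P₁ ∪ P₂)) (interior Q) :=
    (hSQ hQ).mono_right interior_subset
  refine isCPL_of_pairwise_disjoint_interior (Ps := insert (P₁ ∪ P₂) Rest)
    (hf.sub (continuous_indicator_sub hf hG)) (card_insert_erase_erase_le _ hP₁ hP₂ hne) ?_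
    (fun x => ?_) ?_ ?_ ?_
  · simp only [Finset.mem_insert]
    rintro P (rfl | hP)
    exacts [hS, hadm.1 P (hRest.1 hP).2.2]
  · obtain ⟨P, hP, hx⟩ := iUnion₂_eq_univ_iff.1 hadm.2.1 x
    by_cases hP₁₂ : P = P₁ ∨ P = P₂
    · rcases hP₁₂ with rfl | rfl
      exacts [⟨_, Finset.mem_insert_self _ _, .inl hx⟩, ⟨_, Finset.mem_insert_self _ _, .inr hx⟩]
    · exact ⟨P, Finset.mem_insert_of_mem (hRest.2 ⟨fun h => hP₁₂ (.inr h),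
        fun h => hP₁₂ (.inl h), hP⟩), hx⟩
  · rw [Finset.coe_insert, pairwise_insert]
    refine ⟨hdisj.mono (Finset.coe_subset.2 ((Finset.erase_subset _ _).trans
      (Finset.erase_subset _ _))), fun Q hQ _ => ⟨hSQ' hQ, (hSQ' hQ).symm⟩⟩
  · simp only [Finset.mem_insert]
    rintro P (rfl | hP)
    exacts [(hcone P₁ hP₁).union (hcone P₂ hP₂), hcone P (hRest.1 hP).2.2]
  · simp only [Finset.mem_insert]
    rintro P (rfl | hP)
    · exact ⟨G, fun x hx => by simp [indicator_of_mem hx]⟩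
    · obtain ⟨φ, hφ⟩ := hlin P (hRest.1 hP).2.2
      refine ⟨φ, fun x hx => ?_⟩
      dsimp only
      rw [indicator_sub_eq_zero_of_notMem_interior hG (disjoint_right.1 (hSQ hP) hx), sub_zero,
        hφ hx]

end Merge

def det2 : E2 →ₗ[ℝ] E2 →ₗ[ℝ] ℝ :=
  LinearMap.mk₂ ℝ (fun u v => u 0 * v 1 - u 1 * v 0) (fun _ _ _ => by simp; ring)
    (fun _ _ _ => by simp; ring) (fun _ _ _ => by simp; ring) (fun _ _ _ => by simp; ring)

theorem det2_apply (u v : E2) : det2 u v = u 0 * v 1 - u 1 * v 0 := rfl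

@[simp]
theorem det2_self (u : E2) : det2 u u = 0 := by
  rw [det2_apply, mul_comm, sub_self]

theorem det2_swap (u v : E2) : det2 v u = -det2 u v := by
  simp only [det2_apply]; ring

/-- Cramer's rule. -/
theorem det2_smul_eq (u v x : E2) : det2 u v • x = det2 x v • u + det2 u x • v := by
  ext i; fin_cases i <;> simp [det2_apply] <;> ring

/-- The Plücker relation. -/
theorem det2_mul_det2 (a b c d : E2) :
    det2 a b * det2 c d = det2 c b * det2 a d + det2 a c * det2 b d := by
  simp only [det2_apply]; ring

theorem continuous_det2_left (v : E2) : Continuous fun x => det2 x v :=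
  (det2.flip v).continuous_of_finiteDimensional

theorem IsLinearFn.exists_eq_det2 {ℓ : E2 → ℝ} (hℓ : IsLinearFn ℓ) : ∃ e, ∀ x, ℓ x = det2 x e := by
  obtain ⟨a, ha⟩ := hℓ
  refine ⟨![-a 1, a 0], fun x => ?_⟩
  simp [ha, det2_apply, dotProduct, Fin.sum_univ_two]
  ring

theorem interior_setOf_nonneg {φ : E2 →ₗ[ℝ] ℝ} (hφ : φ ≠ 0) :
    interior {x | 0 ≤ φ x} = {x | 0 < φ x} := by
  have hopen := φ.isOpenMap_of_finiteDimensional (LinearMap.surjective_iff_ne_zero.2 hφ)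
  change interior (φ ⁻¹' Ici 0) = φ ⁻¹' Ioi 0
  rw [← hopen.preimage_interior_eq_interior_preimage φ.continuous_of_finiteDimensional,
    interior_Ici]

/-- For `0 < det2 u v` this is the convex cone spanned by `u` and `v`. -/
def sector (u v : E2) : Set E2 := {x | 0 ≤ det2 u x ∧ 0 ≤ det2 x v}

section Sector

variable {u v w : E2}

theorem ne_zero_left_of_det2_pos (h : 0 < det2 u v) : u ≠ 0 := by
  rintro rfl
  simp at h

theorem ne_zero_right_of_det2_pos (h : 0 < det2 u v) : v ≠ 0 := by
  rintro rfl
  simp at h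

theorem eq_smul_left_of_det2_eq_zero {x : E2} (h : det2 u v ≠ 0) (hx : det2 u x = 0) :
    x = (det2 x v / det2 u v) • u := by
  have := det2_smul_eq u v x
  rw [hx, zero_smul, add_zero] at this
  rw [div_eq_inv_mul, mul_smul, ← this, inv_smul_smul₀ h]

theorem eq_smul_right_of_det2_eq_zero {x : E2} (h : det2 u v ≠ 0) (hx : det2 x v = 0) :
    x = (det2 u x / det2 u v) • v := by
  have := det2_smul_eq u v x
  rw [hx, zero_smul, zero_add] at this
  rw [div_eq_inv_mul, mul_smul, ← this, inv_smul_smul₀ h]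

theorem left_mem_sector (h : 0 ≤ det2 u v) : u ∈ sector u v := ⟨(det2_self u).ge, h⟩

theorem right_mem_sector (h : 0 ≤ det2 u v) : v ∈ sector u v := ⟨h, (det2_self v).ge⟩

theorem sector_smul_left {t : ℝ} (ht : 0 < t) (u v : E2) : sector (t • u) v = sector u v := by
  ext x
  simp [sector, mul_nonneg_iff_of_pos_left ht]

theorem sector_smul_right {t : ℝ} (ht : 0 < t) (u v : E2) : sector u (t • v) = sector u v := by
  ext x
  simp [sector, mul_nonneg_iff_of_pos_left ht]

theorem isClosed_sector (u v : E2) : IsClosed (sector u v) :=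
  (isClosed_le continuous_const (det2 u).continuous_of_finiteDimensional).inter
    (isClosed_le continuous_const (continuous_det2_left v))

theorem convex_sector (u v : E2) : Convex ℝ (sector u v) :=
  (convex_halfSpace_ge (det2 u).isLinear 0).inter (convex_halfSpace_ge (det2.flip v).isLinear 0)

theorem interior_sector (h : 0 < det2 u v) :
    interior (sector u v) = {x | 0 < det2 u x ∧ 0 < det2 x v} := by
  have hu : det2 u ≠ 0 := fun h0 => h.ne' (by rw [h0, LinearMap.zero_apply])
  have hv : det2.flip v ≠ 0 := fun h0 => h.ne' (by rw [← det2.flip_apply, h0, LinearMap.zero_apply])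
  exact interior_inter.trans
    (congrArg₂ (· ∩ ·) (interior_setOf_nonneg hu) (interior_setOf_nonneg hv))

theorem add_mem_interior_sector (h : 0 < det2 u v) : u + v ∈ interior (sector u v) := by
  rw [interior_sector h]
  constructor <;> simpa using h

theorem closure_interior_sector (h : 0 < det2 u v) :
    closure (interior (sector u v)) = sector u v := by
  rw [(convex_sector u v).closure_interior_eq_closure_of_nonempty_interior
    ⟨_, add_mem_interior_sector h⟩, (isClosed_sector u v).closure_eq]

theorem frontier_sector_subset (h : 0 < det2 u v) :
    frontier (sector u v) ⊆ {x | det2 u x = 0} ∪ {x | det2 x v = 0} := by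
  rw [(isClosed_sector u v).frontier_eq, interior_sector h]
  rintro x ⟨hx, hxi⟩
  by_contra hc
  simp only [mem_union, mem_ofPred_eq, not_or] at hc
  exact hxi ⟨hx.1.lt_of_ne' hc.1, hx.2.lt_of_ne' hc.2⟩

theorem isPolygonalPiece_sector (h : 0 < det2 u v) : IsPolygonalPiece (sector u v) := by
  have hne : (interior (sector u v)).Nonempty := ⟨_, add_mem_interior_sector h⟩
  refine ⟨isClosed_sector u v, hne, ⟨hne, (convex_sector u v).interior.isPreconnected⟩,
    (closure_interior_sector h).symm, 2,
    ![{x | ∃ t : ℝ, x = 0 + t • u}, {x | ∃ t : ℝ, x = 0 + t • v}], ?_, fun x hx => ?_⟩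
  · intro i
    fin_cases i
    exacts [⟨0, u, ne_zero_left_of_det2_pos h, rfl⟩, ⟨0, v, ne_zero_right_of_det2_pos h, rfl⟩]
  · rcases frontier_sector_subset h hx with hx | hx
    · exact mem_iUnion.2 ⟨0, _, by simpa using eq_smul_left_of_det2_eq_zero h.ne' hx⟩
    · exact mem_iUnion.2 ⟨1, _, by simpa using eq_smul_right_of_det2_eq_zero h.ne' hx⟩

theorem isConnected_compl_sector (h : 0 < det2 u v) : IsConnected (sector u v)ᶜ := by
  have hcompl : (sector u v)ᶜ = {x | det2 u x < 0} ∪ {x | det2 x v < 0} := by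
    ext x
    simp only [sector, mem_compl_iff, mem_ofPred_eq, not_and_or, not_le, mem_union]
  have hneg₁ : det2 u (-(u + v)) < 0 := by simpa using h
  have hneg₂ : det2 (-(u + v)) v < 0 := by simpa using h
  rw [hcompl]
  exact IsConnected.union ⟨_, hneg₁, hneg₂⟩
    ⟨⟨_, hneg₁⟩, (convex_halfSpace_lt (det2 u).isLinear 0).isPreconnected⟩
    ⟨⟨_, hneg₂⟩, (convex_halfSpace_lt (det2.flip v).isLinear 0).isPreconnected⟩

theorem isConeWithApex_compl_interior_sector (h : 0 < det2 u v) :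
    IsConeWithApex 0 (interior (sector u v))ᶜ := by
  rw [interior_sector h]
  refine isConeWithApex_zero_iff.2 fun x hx t ht hxt => hx ?_
  simp only [mem_ofPred_eq, map_smul, LinearMap.smul_apply, smul_eq_mul] at hxt
  exact ⟨pos_of_mul_pos_right hxt.1 ht, pos_of_mul_pos_right hxt.2 ht⟩

theorem exists_linearMap_eqOn_frontier_sector {f : E2 → ℝ} (h : 0 < det2 u v)
    (hf : ∀ x (t : ℝ), 0 ≤ t → f (t • x) = t * f x) :
    ∃ G : E2 →ₗ[ℝ] ℝ, EqOn f G (frontier (sector u v)) := by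
  set G : E2 →ₗ[ℝ] ℝ := (det2 u v)⁻¹ • (f u • det2.flip v + f v • det2 u)
  have hGu : G u = f u := by simp [G]; field_simp
  have hGv : G v = f v := by simp [G]; field_simp
  refine ⟨G, fun x hx => ?_⟩
  have hxS := (isClosed_sector u v).frontier_subset hx
  rcases frontier_sector_subset h hx with hx0 | hx0
  · rw [eq_smul_left_of_det2_eq_zero h.ne' hx0, hf _ _ (div_nonneg hxS.2 h.le), map_smul, hGu,
      smul_eq_mul]
  · rw [eq_smul_right_of_det2_eq_zero h.ne' hx0, hf _ _ (div_nonneg hxS.1 h.le), map_smul, hGv,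
      smul_eq_mul]

theorem sector_eq_of_mem_frontier (h : 0 < det2 u v) (hw : w ∈ frontier (sector u v))
    (hw0 : w ≠ 0) :
    (0 < det2 w v ∧ sector w v = sector u v) ∨ (0 < det2 u w ∧ sector u w = sector u v) := by
  have hwS := (isClosed_sector u v).frontier_subset hw
  rcases frontier_sector_subset h hw with h0 | h0
  · have hw_eq := eq_smul_left_of_det2_eq_zero h.ne' h0
    have hpos : 0 < det2 w v := hwS.2.lt_of_ne' fun h' => hw0 (by simpa [h'] using hw_eq)
    exact .inl ⟨hpos, by rw [hw_eq, sector_smul_left (div_pos hpos h)]⟩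
  · have hw_eq := eq_smul_right_of_det2_eq_zero h.ne' h0
    have hpos : 0 < det2 u w := hwS.1.lt_of_ne' fun h' => hw0 (by simpa [h'] using hw_eq)
    exact .inr ⟨hpos, by rw [hw_eq, sector_smul_right (div_pos hpos h)]⟩

theorem det2_pos_of_adjacent_sectors {e : E2} (huw : 0 < det2 u w) (hwv : 0 < det2 w v)
    (hpos : ∀ x ∈ sector u w ∪ sector w v, x ≠ 0 → 0 < det2 x e) : 0 < det2 u v := by
  have hu := hpos u (.inl (left_mem_sector huw.le)) (ne_zero_left_of_det2_pos huw)
  have hw := hpos w (.inl (right_mem_sector huw.le)) (ne_zero_right_of_det2_pos huw)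
  have hv := hpos v (.inr (right_mem_sector hwv.le)) (ne_zero_right_of_det2_pos hwv)
  have key := congrArg (det2.flip e) (det2_smul_eq u v w)
  simp only [map_add, map_smul, LinearMap.flip_apply, smul_eq_mul] at key
  exact pos_of_mul_pos_left (key ▸ by positivity) hw.le

theorem sector_union_sector (huw : 0 < det2 u w) (hwv : 0 < det2 w v) (huv : 0 < det2 u v) :
    sector u w ∪ sector w v = sector u v := by
  ext x
  constructor
  · rintro (⟨h₁, h₂⟩ | ⟨h₁, h₂⟩)
    · refine ⟨h₁, (mul_nonneg_iff_of_pos_left huw).1 ?_⟩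
      rw [det2_mul_det2 u w x v]
      positivity
    · refine ⟨(mul_nonneg_iff_of_pos_right hwv).1 ?_, h₂⟩
      rw [det2_mul_det2 u x w v]
      positivity
  · rintro ⟨h₁, h₂⟩
    by_cases hxw : 0 ≤ det2 x w
    · exact .inl ⟨h₁, hxw⟩
    · exact .inr ⟨by rw [det2_swap]; linarith, h₂⟩

theorem interior_sector_inter_interior_sector_nonempty_right (huw : 0 < det2 u w)
    (hvw : 0 < det2 v w) : (interior (sector u w) ∩ interior (sector v w)).Nonempty := by
  refine ⟨det2 v w • u + det2 u w • v + (|det2 u v| + 1) • w, ?_, ?_⟩ <;>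
    simp only [interior_sector huw, interior_sector hvw, mem_ofPred_eq, map_add, map_smul,
      LinearMap.add_apply, LinearMap.smul_apply, smul_eq_mul, det2_self, det2_swap u v] <;>
    refine ⟨?_, ?_⟩ <;> nlinarith [le_abs_self (det2 u v), neg_abs_le (det2 u v), det2_swap w u]

theorem interior_sector_inter_interior_sector_nonempty_left (hwu : 0 < det2 w u)
    (hwv : 0 < det2 w v) : (interior (sector w u) ∩ interior (sector w v)).Nonempty := by
  refine ⟨det2 w v • u + det2 w u • v + (|det2 u v| + 1) • w, ?_, ?_⟩ <;>
    simp only [interior_sector hwu, interior_sector hwv, mem_ofPred_eq, map_add, map_smul,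
      LinearMap.add_apply, LinearMap.smul_apply, smul_eq_mul, det2_self, det2_swap u v] <;>
    refine ⟨?_, ?_⟩ <;> nlinarith [le_abs_self (det2 u v), neg_abs_le (det2 u v), det2_swap w u]

end Sector

theorem Real.eq_Ioo_of_isOpen_of_isConnected {J : Set ℝ} (ho : IsOpen J) (hc : IsConnected J)
    (hb : Bornology.IsBounded J) : J = Ioo (sInf J) (sSup J) := by
  refine Subset.antisymm ?_ (hc.Ioo_csInf_csSup_subset hb.bddBelow hb.bddAbove)
  conv_lhs => rw [← ho.interior_eq]
  rw [← interior_Icc]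
  exact interior_mono (subset_Icc_csInf_csSup hb.bddBelow hb.bddAbove)

/-- The ray through `x` meets the line `a + ℝ e` at `a + raySlope a e x • e`. -/
def raySlope (a e x : E2) : ℝ := det2 a x / det2 x e

section ConePiece

variable {P : Set E2} {a e : E2}

theorem raySlope_smul {x : E2} {t : ℝ} (ht : t ≠ 0) : raySlope a e (t • x) = raySlope a e x := by
  simp only [raySlope, map_smul, LinearMap.smul_apply, smul_eq_mul, mul_div_mul_left _ _ ht]

theorem add_raySlope_smul {x : E2} (hx : det2 x e ≠ 0) :
    a + raySlope a e x • e = (det2 a e / det2 x e) • x := by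
  rw [div_eq_inv_mul, mul_smul, det2_smul_eq a e x, smul_add, smul_smul, smul_smul,
    inv_mul_cancel₀ hx, one_smul, raySlope, div_eq_inv_mul]

theorem raySlope_add_smul (ha : det2 a e ≠ 0) (s : ℝ) : raySlope a e (a + s • e) = s := by
  simp [raySlope, ha]

theorem continuousOn_raySlope {K : Set E2} (hK : ∀ x ∈ K, det2 x e ≠ 0) :
    ContinuousOn (raySlope a e) K :=
  (det2 a).continuous_of_finiteDimensional.continuousOn.div
    (continuous_det2_left e).continuousOn hK

theorem zero_notMem_interior_of_det2_pos (hcone : IsConeWithApex 0 P)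
    (hpos : ∀ x ∈ P, x ≠ 0 → 0 < det2 x e) : (0 : E2) ∉ interior P := by
  intro h0
  obtain ⟨y, hy⟩ := exists_ne (0 : E2)
  have hP := hcone.eq_univ_of_zero_mem_interior h0
  have h₁ := hpos y (hP ▸ mem_univ y) hy
  have h₂ := hpos (-y) (hP ▸ mem_univ _) (neg_ne_zero.2 hy)
  rw [map_neg, LinearMap.neg_apply] at h₂
  linarith

theorem mem_interior_iff_add_raySlope_smul_mem (hcone : IsConeWithApex 0 P) {x : E2}
    (ha : 0 < det2 a e) (hx : 0 < det2 x e) :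
    x ∈ interior P ↔ a + raySlope a e x • e ∈ interior P := by
  rw [add_raySlope_smul hx.ne']
  refine ⟨hcone.smul_mem_interior (div_pos ha hx), fun h => ?_⟩
  simpa [smul_smul, ha.ne', hx.ne'] using hcone.smul_mem_interior (div_pos hx ha) h

/-- Every ray through `interior P` also meets the compact set `P ∩ sphere 0 1`. -/
theorem isBounded_raySlope_image_interior (hP : IsClosed P) (hcone : IsConeWithApex 0 P)
    (hpos : ∀ x ∈ P, x ≠ 0 → 0 < det2 x e) :
    Bornology.IsBounded (raySlope a e '' interior P) := by
  have hK : ∀ x ∈ P ∩ Metric.sphere 0 1, det2 x e ≠ 0 := fun x hx =>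
    (hpos x hx.1 (ne_zero_of_mem_sphere one_ne_zero ⟨x, hx.2⟩)).ne'
  refine (((isCompact_sphere 0 1).inter_left hP).image_of_continuousOn
    (continuousOn_raySlope (a := a) hK)).isBounded.subset ?_
  rintro _ ⟨x, hx, rfl⟩
  have hx0 : x ≠ 0 := fun h => zero_notMem_interior_of_det2_pos hcone hpos (h ▸ hx)
  refine ⟨‖x‖⁻¹ • x, ⟨isConeWithApex_zero_iff.1 hcone x (interior_subset hx) _ (by positivity),
    ?_⟩, raySlope_smul (by positivity)⟩
  rw [mem_sphere_zero_iff_norm, norm_smul, norm_inv, norm_norm,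
    inv_mul_cancel₀ (norm_ne_zero_iff.2 hx0)]

theorem interior_eq_of_slice_eq_Ioo (hcone : IsConeWithApex 0 P) (ha : 0 < det2 a e)
    (hint : ∀ x ∈ interior P, 0 < det2 x e) {α β : ℝ} (hαβ : α < β)
    (hJ : {s : ℝ | a + s • e ∈ interior P} = Ioo α β) :
    interior P = {x | 0 < det2 (a + α • e) x ∧ 0 < det2 x (a + β • e)} := by
  have hslice {x : E2} (hx : 0 < det2 x e) :
      x ∈ interior P ↔ α * det2 x e < det2 a x ∧ det2 a x < β * det2 x e := by
    have hmem : a + raySlope a e x • e ∈ interior P ↔ raySlope a e x ∈ Ioo α β := by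
      rw [← hJ]
      rfl
    rw [mem_interior_iff_add_raySlope_smul_mem hcone ha hx, hmem, mem_Ioo, raySlope,
      lt_div_iff₀ hx, div_lt_iff₀ hx]
  ext x
  simp only [mem_ofPred_eq, map_add, map_smul, LinearMap.add_apply, LinearMap.smul_apply,
    smul_eq_mul, det2_swap x e, det2_swap a x]
  constructor
  · intro hx
    have := (hslice (hint x hx)).1 hx
    constructor <;> linarith
  · rintro ⟨h₁, h₂⟩
    have hx : 0 < det2 x e := by nlinarith
    exact (hslice hx).2 ⟨by linarith, by linarith⟩

theorem IsPolygonalPiece.eq_sector (hP : IsPolygonalPiece P) (hcone : IsConeWithApex 0 P)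
    (hpos : ∀ x ∈ P, x ≠ 0 → 0 < det2 x e) : ∃ u v, 0 < det2 u v ∧ P = sector u v := by
  have hint : ∀ x ∈ interior P, 0 < det2 x e := fun x hx =>
    hpos x (interior_subset hx) fun h => zero_notMem_interior_of_det2_pos hcone hpos (h ▸ hx)
  obtain ⟨a, haP⟩ := hP.2.1
  have ha := hint a haP
  set J := {s : ℝ | a + s • e ∈ interior P}
  have hJ : J = raySlope a e '' interior P := by
    ext s
    refine ⟨fun hs => ⟨_, hs, raySlope_add_smul ha.ne' s⟩, ?_⟩
    rintro ⟨x, hx, rfl⟩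
    exact (mem_interior_iff_add_raySlope_smul_mem hcone ha (hint x hx)).1 hx
  have hJconn : IsConnected J :=
    hJ ▸ hP.2.2.1.image _ (continuousOn_raySlope fun x hx => (hint x hx).ne')
  have hJopen : IsOpen J :=
    isOpen_interior.preimage (continuous_const.add (continuous_id.smul continuous_const))
  have hJbdd : Bornology.IsBounded J := hJ ▸ isBounded_raySlope_image_interior hP.1 hcone hpos
  have hJeq := Real.eq_Ioo_of_isOpen_of_isConnected hJopen hJconn hJbdd
  have hαβ : sInf J < sSup J := nonempty_Ioo.1 (hJeq ▸ hJconn.nonempty)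
  have huv : 0 < det2 (a + sInf J • e) (a + sSup J • e) := by
    have : det2 (a + sInf J • e) (a + sSup J • e) = (sSup J - sInf J) * det2 a e := by
      simp only [map_add, map_smul, LinearMap.add_apply, LinearMap.smul_apply, smul_eq_mul,
        det2_self, det2_swap e a]
      ring
    rw [this]
    exact mul_pos (sub_pos.2 hαβ) ha
  refine ⟨_, _, huv, ?_⟩
  rw [← hP.closure_interior, interior_eq_of_slice_eq_Ioo hcone ha hint hαβ hJeq,
    ← interior_sector huv, closure_interior_sector huv]

end ConePiece

theorem exists_union_eq_sector {P₁ P₂ : Set E2} (hP₁ : IsPolygonalPiece P₁)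
    (hP₂ : IsPolygonalPiece P₂) (hc₁ : IsConeWithApex 0 P₁) (hc₂ : IsConeWithApex 0 P₂)
    (hdisj : Disjoint (interior P₁) (interior P₂)) {w : E2} (hw : w ∈ frontier P₁ ∩ frontier P₂)
    (hw0 : w ≠ 0) {e : E2} (hpos : ∀ x ∈ P₁ ∪ P₂, x ≠ 0 → 0 < det2 x e) :
    ∃ u v, 0 < det2 u v ∧ P₁ ∪ P₂ = sector u v := by
  obtain ⟨a₁, b₁, h₁, rfl⟩ := hP₁.eq_sector hc₁ fun x hx => hpos x (.inl hx)
  obtain ⟨a₂, b₂, h₂, rfl⟩ := hP₂.eq_sector hc₂ fun x hx => hpos x (.inr hx)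
  have merge {u v : E2} (huw : 0 < det2 u w) (hwv : 0 < det2 w v)
      (hpos : ∀ x ∈ sector u w ∪ sector w v, x ≠ 0 → 0 < det2 x e) :
      ∃ u' v', 0 < det2 u' v' ∧ sector u w ∪ sector w v = sector u' v' :=
    have huv := det2_pos_of_adjacent_sectors huw hwv hpos
    ⟨u, v, huv, sector_union_sector huw hwv huv⟩
  rcases sector_eq_of_mem_frontier h₁ hw.1 hw0 with ⟨hw₁, he₁⟩ | ⟨hw₁, he₁⟩ <;>
    rcases sector_eq_of_mem_frontier h₂ hw.2 hw0 with ⟨hw₂, he₂⟩ | ⟨hw₂, he₂⟩ <;>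
    rw [← he₁, ← he₂] at hdisj hpos ⊢
  · exact absurd hdisj (not_disjoint_iff_nonempty_inter.2
      (interior_sector_inter_interior_sector_nonempty_left hw₁ hw₂))
  · rw [union_comm] at hpos ⊢
    exact merge hw₂ hw₁ hpos
  · exact merge hw₁ hw₂ hpos
  · exact absurd hdisj (not_disjoint_iff_nonempty_inter.2
      (interior_sector_inter_interior_sector_nonempty_right hw₁ hw₂))

theorem cpl_merge_pieces_general (p : ℕ) (f : E2 → ℝ)
    (Ps : Finset (Set E2)) (hcard : Ps.card ≤ p)
    (hcont : Continuous f) (hadm : IsAdmissible f Ps)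
    (hcone : ∀ P ∈ Ps, IsConeWithApex 0 P)
    (hlin : ∀ P ∈ Ps, ∃ g : E2 → ℝ, IsLinearFn g ∧ EqOn f g P)
    (P₁ P₂ : Set E2) (hP₁ : P₁ ∈ Ps) (hP₂ : P₂ ∈ Ps) (hne : P₁ ≠ P₂)
    (hadj : ∃ a b : E2, a ≠ b ∧ segment ℝ a b ⊆ P₁ ∩ P₂)
    (hangle : ∃ ℓ : E2 → ℝ, IsLinearFn ℓ ∧ ∀ x ∈ (P₁ ∪ P₂) \ {0}, 0 < ℓ x) :
    ∃ f' : E2 → ℝ, IsCPL 3 f' ∧ IsCPL (p - 1) (fun x => f x - f' x) := by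
  obtain ⟨ℓ, hℓ, hℓpos⟩ := hangle
  obtain ⟨e, he⟩ := hℓ.exists_eq_det2
  obtain ⟨w, hwP, hw0⟩ : ∃ w ∈ P₁ ∩ P₂, w ≠ 0 := by
    obtain ⟨a, b, hab, hseg⟩ := hadj
    by_cases ha : a = 0
    · exact ⟨b, hseg (right_mem_segment ℝ a b), fun hb => hab (ha.trans hb.symm)⟩
    · exact ⟨a, hseg (left_mem_segment ℝ a b), ha⟩
  have hw : w ∈ frontier P₁ ∩ frontier P₂ := hadm.2.2.1 P₁ hP₁ P₂ hP₂ hne ▸ hwP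
  have hdisj := hadm.pairwise_disjoint_interior hP₁ hP₂ hne
  obtain ⟨u, v, huv, hS⟩ := exists_union_eq_sector (hadm.1 P₁ hP₁) (hadm.1 P₂ hP₂)
    (hcone P₁ hP₁) (hcone P₂ hP₂) hdisj hw hw0 fun x hx hx0 => he x ▸ hℓpos x ⟨hx, hx0⟩
  have hlin' : ∀ P ∈ Ps, ∃ φ : E2 →ₗ[ℝ] ℝ, EqOn f φ P := fun P hP => by
    obtain ⟨g, hg, hfg⟩ := hlin P hP
    obtain ⟨φ, rfl⟩ := hg.exists_linearMap
    exact ⟨φ, hfg⟩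
  obtain ⟨G, hG⟩ := exists_linearMap_eqOn_frontier_sector huv
    fun x t => apply_smul_of_iUnion_eq_univ hadm.2.1 hcone hlin' x
  rw [← hS] at hG
  have hSpiece := hS ▸ isPolygonalPiece_sector huv
  refine ⟨_, isCPL_three_indicator_sub hcont (hadm.1 P₁ hP₁) (hadm.1 P₂ hP₂) (hcone P₁ hP₁)
    (hcone P₂ hP₂) (hlin' P₁ hP₁) (hlin' P₂ hP₂) hdisj
    (hSpiece.compl_interior (hS ▸ isConnected_compl_sector huv))
    (hS ▸ isConeWithApex_compl_interior_sector huv) hG,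
    (isCPL_sub_indicator_sub hcont hadm hcone hlin' hP₁ hP₂ hne hSpiece hG).mono (by omega)⟩

/-- If a CPL function with `p ≥ 3` pieces has two adjacent pieces
enclosing an angle less than `π`, then one can subtract a CPL function with at most 3
pieces so that the difference is CPL with at most `p - 1` pieces. -/
theorem cpl_merge_pieces (p : ℕ) (hp : 3 ≤ p) (f : E2 → ℝ)
    (Ps : Finset (Set E2)) (hcard : Ps.card ≤ p)
    (hcont : Continuous f) (hadm : IsAdmissible f Ps)
    (hcone : ∀ P ∈ Ps, IsConeWithApex 0 P)
    (hlin : ∀ P ∈ Ps, ∃ g : E2 → ℝ, IsLinearFn g ∧ EqOn f g P)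
    (P₁ P₂ : Set E2) (hP₁ : P₁ ∈ Ps) (hP₂ : P₂ ∈ Ps) (hne : P₁ ≠ P₂)
    (hadj : ∃ a b : E2, a ≠ b ∧ segment ℝ a b ⊆ P₁ ∩ P₂)
    (hangle : ∃ ℓ : E2 → ℝ, IsLinearFn ℓ ∧ ∀ x ∈ (P₁ ∪ P₂) \ {0}, 0 < ℓ x) :
    ∃ f' : E2 → ℝ, IsCPL 3 f' ∧ IsCPL (p - 1) (fun x => f x - f' x) :=
  cpl_merge_pieces_general p f Ps hcard hcont hadm hcone hlin P₁ P₂ hP₁ hP₂ hne hadj hangle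
end
end

section
/- Let f₁, f₂, f₃ : ℝ² → ℝ be affine functions and let σ₁, σ₂ ∈ {−1, 1}. Then there exist affine maps S₁ : ℝ² → ℝ⁵, S₂ : ℝ⁵ → ℝ³ and S₃ : ℝ³ → ℝ such that for all x ∈ ℝ²: σ₁ · max( f₁(x), σ₂ · max( f₂(x), f₃(x) ) ) = S₃( ρ( S₂( ρ( S₁(x) ) ) ) ). That is, each signed nested maximum of three affine functions is represented by a ReLU network with two hidden layers of widths 5 and 3. -/
open Set

noncomputable section

/-!
ReLU recovers the identity as `t = ρ t - ρ (-t)` and the maximum as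
`max u v = ρ (u - v) + ρ v - ρ (-v)`. The first hidden layer computes `f₂ - f₃, ±f₃, ±f₁`;
`f₁` and `m = σ₂ max(f₂, f₃)` are linear in the ReLUs of these, so the second hidden layer can
compute `f₁ - m, ±m`, from whose ReLUs the output layer recovers `σ₁ max(f₁, m)`.
-/

section MaxZero

variable {α : Type*} [AddCommGroup α] [LinearOrder α] [IsOrderedAddMonoid α]

theorem max_zero_sub_max_zero_neg (t : α) : max 0 t - max 0 (-t) = t := by
  simpa only [max_comm] using max_zero_sub_max_neg_zero_eq_self t

theorem max_zero_sub_add (u v : α) : max 0 (u - v) + v = max u v := by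
  rw [← sub_self v, max_sub_sub_right, max_comm, sub_add_cancel]

theorem max_eq_max_zero_sub_add_max_zero_sub_max_zero_neg (u v : α) :
    max u v = max 0 (u - v) + max 0 v - max 0 (-v) := by
  rw [add_sub_assoc, max_zero_sub_max_zero_neg, max_zero_sub_add]

end MaxZero

theorem relu_apply {n : ℕ} (x : Fin n → ℝ) (i : Fin n) : relu x i = max 0 (x i) := rfl

theorem IsAffineFn.neg {f : E2 → ℝ} (hf : IsAffineFn f) : IsAffineFn (-f) := by
  obtain ⟨a, b, hf⟩ := hf
  exact ⟨-a, -b, fun x => by simp only [Pi.neg_apply, hf, neg_dotProduct, neg_add]⟩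

theorem IsAffineFn.sub {f g : E2 → ℝ} (hf : IsAffineFn f) (hg : IsAffineFn g) :
    IsAffineFn (f - g) := by
  obtain ⟨a, b, hf⟩ := hf
  obtain ⟨c, d, hg⟩ := hg
  exact ⟨a - c, b - d, fun x => by simp only [Pi.sub_apply, hf, hg, sub_dotProduct]; ring⟩

theorem exists_mulVec_add_of_forall_isAffineFn {n : ℕ} {F : Fin n → E2 → ℝ}
    (hF : ∀ i, IsAffineFn (F i)) :
    ∃ (A : Matrix (Fin n) (Fin 2) ℝ) (b : Fin n → ℝ), ∀ x, (fun i => F i x) = A.mulVec x + b := by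
  choose a b hab using hF
  exact ⟨Matrix.of a, b, fun x => funext fun i => hab i x⟩

def firstLayer (f₁ f₂ f₃ : E2 → ℝ) (x : E2) : Fin 5 → ℝ :=
  fun i => ![f₂ - f₃, f₃, -f₃, f₁, -f₁] i x

theorem exists_firstLayer_eq_mulVec_add {f₁ f₂ f₃ : E2 → ℝ}
    (h₁ : IsAffineFn f₁) (h₂ : IsAffineFn f₂) (h₃ : IsAffineFn f₃) :
    ∃ (A : Matrix (Fin 5) (Fin 2) ℝ) (b : Fin 5 → ℝ),
      ∀ x, firstLayer f₁ f₂ f₃ x = A.mulVec x + b := by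
  refine exists_mulVec_add_of_forall_isAffineFn fun i => ?_
  fin_cases i
  exacts [h₂.sub h₃, h₃, h₃.neg, h₁, h₁.neg]

def secondLayer (σ : ℝ) (y : Fin 5 → ℝ) : Fin 3 → ℝ :=
  ![y 3 - y 4 - σ * (y 0 + y 1 - y 2), σ * (y 0 + y 1 - y 2), -(σ * (y 0 + y 1 - y 2))]

theorem secondLayer_eq_mulVec (σ : ℝ) (y : Fin 5 → ℝ) :
    secondLayer σ y =
      Matrix.mulVec !![-σ, -σ, σ, 1, -1; σ, σ, -σ, 0, 0; -σ, -σ, σ, 0, 0] y := by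
  ext i
  fin_cases i <;>
    simp only [secondLayer, Matrix.mulVec, dotProduct, Fin.sum_univ_five, Matrix.of_apply,
      Fin.reduceFinMk, Fin.zero_eta, Fin.mk_one, Fin.isValue, Matrix.cons_val,
      Matrix.cons_val_zero, Matrix.cons_val_one] <;> ring

theorem secondLayer_relu_firstLayer (f₁ f₂ f₃ : E2 → ℝ) (σ : ℝ) (x : E2) :
    secondLayer σ (relu (firstLayer f₁ f₂ f₃ x)) =
      ![f₁ x - σ * max (f₂ x) (f₃ x), σ * max (f₂ x) (f₃ x), -(σ * max (f₂ x) (f₃ x))] := by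
  simp only [secondLayer, firstLayer, relu_apply, Pi.sub_apply, Pi.neg_apply,
    Matrix.cons_val_zero, Matrix.cons_val_one, Matrix.cons_val_two, Matrix.cons_val_three,
    Matrix.cons_val_four, Matrix.head_cons, Matrix.tail_cons]
  rw [max_zero_sub_max_zero_neg, ← max_eq_max_zero_sub_add_max_zero_sub_max_zero_neg]

theorem signed_max_relu_network_general (f₁ f₂ f₃ : E2 → ℝ)
    (h₁ : IsAffineFn f₁) (h₂ : IsAffineFn f₂) (h₃ : IsAffineFn f₃)
    (σ₁ σ₂ : ℝ) :
    ∃ (S₁ : E2 → (Fin 5 → ℝ)) (S₂ : (Fin 5 → ℝ) → (Fin 3 → ℝ)) (S₃ : (Fin 3 → ℝ) → ℝ),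
      (∃ (A : Matrix (Fin 5) (Fin 2) ℝ) (b : Fin 5 → ℝ), ∀ x, S₁ x = A.mulVec x + b) ∧
      (∃ (A : Matrix (Fin 3) (Fin 5) ℝ) (b : Fin 3 → ℝ), ∀ x, S₂ x = A.mulVec x + b) ∧
      (∃ (a : Fin 3 → ℝ) (b : ℝ), ∀ x, S₃ x = dotProduct a x + b) ∧
      ∀ x, σ₁ * max (f₁ x) (σ₂ * max (f₂ x) (f₃ x)) = S₃ (relu (S₂ (relu (S₁ x)))) := by
  refine ⟨firstLayer f₁ f₂ f₃, secondLayer σ₂, fun z => σ₁ * (z 0 + z 1 - z 2),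
    exists_firstLayer_eq_mulVec_add h₁ h₂ h₃,
    ⟨_, 0, fun y => by rw [secondLayer_eq_mulVec, add_zero]⟩,
    ⟨![σ₁, σ₁, -σ₁], 0, fun z => ?_⟩, fun x => ?_⟩
  · simp only [dotProduct, Fin.sum_univ_three, Matrix.cons_val_zero, Matrix.cons_val_one,
      Matrix.cons_val_two, Matrix.head_cons, Matrix.tail_cons, add_zero]
    ring
  · simp only [secondLayer_relu_firstLayer, relu_apply, Matrix.cons_val_zero,
      Matrix.cons_val_one, Matrix.cons_val_two, Matrix.head_cons, Matrix.tail_cons]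
    rw [← max_eq_max_zero_sub_add_max_zero_sub_max_zero_neg]

/-- Each signed nested maximum of three affine functions is represented
by a ReLU network with two hidden layers of widths 5 and 3. -/
theorem signed_max_relu_network (f₁ f₂ f₃ : E2 → ℝ)
    (h₁ : IsAffineFn f₁) (h₂ : IsAffineFn f₂) (h₃ : IsAffineFn f₃)
    (σ₁ σ₂ : ℝ) (hσ₁ : σ₁ = 1 ∨ σ₁ = -1) (hσ₂ : σ₂ = 1 ∨ σ₂ = -1) :
    ∃ (S₁ : E2 → (Fin 5 → ℝ)) (S₂ : (Fin 5 → ℝ) → (Fin 3 → ℝ)) (S₃ : (Fin 3 → ℝ) → ℝ),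
      (∃ (A : Matrix (Fin 5) (Fin 2) ℝ) (b : Fin 5 → ℝ), ∀ x, S₁ x = A.mulVec x + b) ∧
      (∃ (A : Matrix (Fin 3) (Fin 5) ℝ) (b : Fin 3 → ℝ), ∀ x, S₂ x = A.mulVec x + b) ∧
      (∃ (a : Fin 3 → ℝ) (b : ℝ), ∀ x, S₃ x = dotProduct a x + b) ∧
      ∀ x, σ₁ * max (f₁ x) (σ₂ * max (f₂ x) (f₃ x)) = S₃ (relu (S₂ (relu (S₁ x)))) :=
  signed_max_relu_network_general f₁ f₂ f₃ h₁ h₂ h₃ σ₁ σ₂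
end
end

section
/- Let f : ℝ² → ℝ be continuous, let 𝒫 be a finite partition of ℝ² (pairwise disjoint nonempty sets whose union is ℝ²), and for each P ∈ 𝒫 let f_P : ℝ² → ℝ be an affine map with f = f_P on P, such that f_P ≠ f_Q whenever P ≠ Q. Then ℝ² = ⋃_{P ∈ 𝒫} closure(interior P), and for every P ∈ 𝒫 one has f = f_P on closure(interior P). -/
open Set

noncomputable section

/-!
The affine maps `F P` are pairwise distinct, so any two of them differ on an open dense set
(two affine maps agreeing on an open set are equal); on the finite intersection `G` of these
sets all of them are pairwise distinct. A point `x ∈ G ∩ P` outside `interior P` lies in the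
closure of `Pᶜ`, hence of some other member `Q`; by continuity `f x = F Q x`, while also
`f x = F P x`, contradicting `x ∈ G`. So the interiors cover the dense set `G`.
-/

section

variable {𝕜 E F : Type*} [NontriviallyNormedField 𝕜] [NormedAddCommGroup E] [NormedSpace 𝕜 E]
  [PreconnectedSpace E] [NormedAddCommGroup F] [NormedSpace 𝕜 F]

theorem AnalyticOnNhd.dense_setOf_ne {g h : E → F} (hg : AnalyticOnNhd 𝕜 g univ)
    (hh : AnalyticOnNhd 𝕜 h univ) (hne : g ≠ h) : Dense {x | g x ≠ h x} := by
  refine interior_eq_empty_iff_dense_compl.1 (eq_empty_iff_forall_notMem.2 fun x hx => ?_)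
  exact hne (hg.eq_of_eventuallyEq hh (mem_interior_iff_mem_nhds.1 hx))

end

section

variable {X Y : Type*} [TopologicalSpace X] [TopologicalSpace Y] [T2Space Y]
  {Ps : Finset (Set X)} {f : X → Y} {F : Set X → X → Y}

theorem exists_ne_mem_closure_of_notMem_interior (hcover : (⋃ P ∈ Ps, P) = univ)
    {P : Set X} {x : X} (hx : x ∉ interior P) : ∃ Q ∈ Ps, Q ≠ P ∧ x ∈ closure Q := by
  have hcompl : Pᶜ ⊆ ⋃ Q ∈ Ps.erase P, Q := fun z hz => by
    obtain ⟨Q, hQ, hzQ⟩ := mem_iUnion₂.1 (hcover ▸ mem_univ z)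
    exact mem_iUnion₂.2 ⟨Q, Finset.mem_erase.2 ⟨fun h => hz (h ▸ hzQ), hQ⟩, hzQ⟩
  have hxc : x ∈ ⋃ Q ∈ Ps.erase P, closure Q := by
    rw [← Finset.closure_biUnion]
    exact closure_mono hcompl (closure_compl (s := P) ▸ hx)
  obtain ⟨Q, hQ, hxQ⟩ := mem_iUnion₂.1 hxc
  exact ⟨Q, Finset.mem_of_mem_erase hQ, Finset.ne_of_mem_erase hQ, hxQ⟩

variable (hf : Continuous f) (hF : ∀ P ∈ Ps, Continuous (F P))
  (heq : ∀ P ∈ Ps, EqOn f (F P) P)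
include hf hF heq

theorem mem_interior_of_pairwise_ne (hcover : (⋃ P ∈ Ps, P) = univ) {x : X}
    (hx : ∀ P ∈ Ps, ∀ Q ∈ Ps, P ≠ Q → F P x ≠ F Q x) {P : Set X} (hP : P ∈ Ps) (hxP : x ∈ P) :
    x ∈ interior P := by
  by_contra hxi
  obtain ⟨Q, hQ, hQP, hxQ⟩ := exists_ne_mem_closure_of_notMem_interior hcover hxi
  refine hx P hP Q hQ hQP.symm ?_
  rw [← heq P hP hxP, (heq Q hQ).closure hf (hF Q hQ) hxQ]

theorem dense_biUnion_interior_of_dense_setOf_ne (hcover : (⋃ P ∈ Ps, P) = univ)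
    (hsep : ∀ P ∈ Ps, ∀ Q ∈ Ps, P ≠ Q → Dense {x | F P x ≠ F Q x}) :
    Dense (⋃ P ∈ Ps, interior P) := by
  classical
  let differ : Set X × Set X → Set X := fun p => {x | F p.1 x ≠ F p.2 x}
  have hG : Dense (⋂₀ (differ '' Ps.offDiag)) := by
    refine (Ps.offDiag.finite_toSet.image differ).dense_sInter ?_ ?_ <;>
      rintro _ ⟨⟨P, Q⟩, hPQ, rfl⟩ <;> obtain ⟨hP, hQ, hne⟩ := Finset.mem_offDiag.1 hPQ
    · exact isOpen_ne_fun (hF P hP) (hF Q hQ)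
    · exact hsep P hP Q hQ hne
  refine hG.mono fun x hx => ?_
  obtain ⟨P, hP, hxP⟩ := mem_iUnion₂.1 (hcover ▸ mem_univ x)
  refine mem_iUnion₂.2 ⟨P, hP, mem_interior_of_pairwise_ne hf hF heq hcover ?_ hP hxP⟩
  intro P hP Q hQ hne
  exact mem_sInter.1 hx _ ⟨(P, Q), Finset.mem_offDiag.2 ⟨hP, hQ, hne⟩, rfl⟩

end

theorem IsAffineFn.analyticOnNhd {g : E2 → ℝ} (hg : IsAffineFn g) : AnalyticOnNhd ℝ g univ := by
  obtain ⟨a, b, hab⟩ := hg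
  rw [funext hab]
  exact fun x _ => ((dotProductBilin ℝ ℝ a).toContinuousLinearMap.analyticAt x).add analyticAt_const

theorem cpa_partition_regularization_general (f : E2 → ℝ) (hf : Continuous f)
    (Ps : Finset (Set E2))
    (hcover : (⋃ P ∈ Ps, P) = univ)
    (F : Set E2 → E2 → ℝ)
    (haff : ∀ P ∈ Ps, IsAffineFn (F P))
    (heq : ∀ P ∈ Ps, EqOn f (F P) P)
    (hdistinct : ∀ P ∈ Ps, ∀ Q ∈ Ps, P ≠ Q → F P ≠ F Q) :
    (⋃ P ∈ Ps, closure (interior P)) = univ ∧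
    ∀ P ∈ Ps, EqOn f (F P) (closure (interior P)) := by
  have hF : ∀ P ∈ Ps, Continuous (F P) := fun P hP => (haff P hP).analyticOnNhd.continuous
  have hsep : ∀ P ∈ Ps, ∀ Q ∈ Ps, P ≠ Q → Dense {x | F P x ≠ F Q x} := fun P hP Q hQ hPQ =>
    (haff P hP).analyticOnNhd.dense_setOf_ne (haff Q hQ).analyticOnNhd (hdistinct P hP Q hQ hPQ)
  refine ⟨?_, fun P hP => ((heq P hP).closure hf (hF P hP)).mono (closure_mono interior_subset)⟩
  rw [← Finset.closure_biUnion]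
  exact (dense_biUnion_interior_of_dense_setOf_ne hf hF heq hcover hsep).closure_eq

/-- For a continuous function agreeing with pairwise distinct affine
maps on the members of a finite partition of the plane, the closures of the interiors of
the members cover the plane, and `f` agrees with the respective affine component on each
such closure. -/
theorem cpa_partition_regularization (f : E2 → ℝ) (hf : Continuous f)
    (Ps : Finset (Set E2))
    (hne : ∀ P ∈ Ps, P.Nonempty)
    (hdisj : ∀ P ∈ Ps, ∀ Q ∈ Ps, P ≠ Q → P ∩ Q = ∅)
    (hcover : (⋃ P ∈ Ps, P) = univ)
    (F : Set E2 → E2 → ℝ)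
    (haff : ∀ P ∈ Ps, IsAffineFn (F P))
    (heq : ∀ P ∈ Ps, EqOn f (F P) P)
    (hdistinct : ∀ P ∈ Ps, ∀ Q ∈ Ps, P ≠ Q → F P ≠ F Q) :
    (⋃ P ∈ Ps, closure (interior P)) = univ ∧
    ∀ P ∈ Ps, EqOn f (F P) (closure (interior P)) :=
  cpa_partition_regularization_general f hf Ps hcover F haff heq hdistinct
end
end

section
/- Let u ∈ ℝ² with u ≠ 0, let c ∈ ℝ, and let g₁, g₂ : ℝ² → ℝ be affine functions that agree on the line { x ∈ ℝ² : ⟨u, x⟩ = c }. Define f : ℝ² → ℝ by f(x) = g₁(x) if ⟨u, x⟩ ≤ c and f(x) = g₂(x) if ⟨u, x⟩ > c. Then either f(x) = max(g₁(x), g₂(x)) for all x ∈ ℝ², or f(x) = min(g₁(x), g₂(x)) for all x ∈ ℝ². -/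
open Set

noncomputable section

theorem IsAffineFn.sub_s12 {g₁ g₂ : E2 → ℝ} (h₁ : IsAffineFn g₁) (h₂ : IsAffineFn g₂) :
    IsAffineFn (g₁ - g₂) := by
  obtain ⟨a₁, b₁, hg₁⟩ := h₁
  obtain ⟨a₂, b₂, hg₂⟩ := h₂
  refine ⟨a₁ - a₂, b₁ - b₂, fun x => ?_⟩
  simp only [Pi.sub_apply, hg₁, hg₂, sub_dotProduct]
  ring

theorem exists_eq_mul_of_eq_zero_on_hyperplane {ι : Type*} [Fintype ι] {u : ι → ℝ} (hu : u ≠ 0)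
    {c : ℝ} {a : ι → ℝ} {b : ℝ} (h : ∀ x, u ⬝ᵥ x = c → a ⬝ᵥ x + b = 0) :
    ∃ l : ℝ, ∀ x, a ⬝ᵥ x + b = l * (u ⬝ᵥ x - c) := by
  have huu : u ⬝ᵥ u ≠ 0 := fun h0 => hu (dotProduct_self_eq_zero.mp h0)
  refine ⟨a ⬝ᵥ u / u ⬝ᵥ u, fun x => ?_⟩
  -- project `x` onto the hyperplane along `u`
  set t := (u ⬝ᵥ x - c) / u ⬝ᵥ u
  have hproj : u ⬝ᵥ (x - t • u) = c := by
    rw [dotProduct_sub, dotProduct_smul, smul_eq_mul, div_mul_cancel₀ _ huu]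
    ring
  have hvanish := h _ hproj
  rw [dotProduct_sub, dotProduct_smul, smul_eq_mul] at hvanish
  calc a ⬝ᵥ x + b = t * a ⬝ᵥ u := by linarith
    _ = a ⬝ᵥ u / u ⬝ᵥ u * (u ⬝ᵥ x - c) := by ring

section Gluing

variable {X : Type*} {φ f g₁ g₂ : X → ℝ} {c l : ℝ}

theorem glue_eq_min_of_sub_eq_mul (hl : 0 ≤ l) (hsub : ∀ x, g₁ x - g₂ x = l * (φ x - c))
    (hf₁ : ∀ x, φ x ≤ c → f x = g₁ x) (hf₂ : ∀ x, c < φ x → f x = g₂ x) (x : X) :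
    f x = min (g₁ x) (g₂ x) := by
  rcases le_or_gt (φ x) c with hx | hx
  · have : g₁ x ≤ g₂ x := by nlinarith [hsub x]
    rw [hf₁ x hx, min_eq_left this]
  · have : g₂ x ≤ g₁ x := by nlinarith [hsub x]
    rw [hf₂ x hx, min_eq_right this]

theorem glue_eq_max_of_sub_eq_mul (hl : l ≤ 0) (hsub : ∀ x, g₁ x - g₂ x = l * (φ x - c))
    (hf₁ : ∀ x, φ x ≤ c → f x = g₁ x) (hf₂ : ∀ x, c < φ x → f x = g₂ x) (x : X) :
    f x = max (g₁ x) (g₂ x) := by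
  have hneg := glue_eq_min_of_sub_eq_mul (φ := φ) (c := c) (f := -f) (g₁ := -g₁) (g₂ := -g₂)
    (neg_nonneg.2 hl)
    (fun y => by simp only [Pi.neg_apply]; linarith [hsub y])
    (fun y hy => by simp [hf₁ y hy]) (fun y hy => by simp [hf₂ y hy]) x
  simpa [min_neg_neg] using hneg

end Gluing

/-- Gluing two affine functions along the line where they agree yields
either their maximum or their minimum. -/
theorem glue_affine_max_or_min (u : E2) (hu : u ≠ 0) (c : ℝ) (g₁ g₂ : E2 → ℝ)
    (h₁ : IsAffineFn g₁) (h₂ : IsAffineFn g₂)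
    (hagree : ∀ x, dotProduct u x = c → g₁ x = g₂ x)
    (f : E2 → ℝ)
    (hf₁ : ∀ x, dotProduct u x ≤ c → f x = g₁ x)
    (hf₂ : ∀ x, c < dotProduct u x → f x = g₂ x) :
    (∀ x, f x = max (g₁ x) (g₂ x)) ∨ (∀ x, f x = min (g₁ x) (g₂ x)) := by
  obtain ⟨a, b, hab⟩ := h₁.sub_s12 h₂
  obtain ⟨l, hl⟩ := exists_eq_mul_of_eq_zero_on_hyperplane hu
    fun x hx => by rw [← hab, Pi.sub_apply, hagree x hx, sub_self]
  have hsub : ∀ x, g₁ x - g₂ x = l * (u ⬝ᵥ x - c) := fun x => by rw [← hl, ← hab, Pi.sub_apply]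
  rcases le_total l 0 with hneg | hpos
  · exact Or.inl (glue_eq_max_of_sub_eq_mul hneg hsub hf₁ hf₂)
  · exact Or.inr (glue_eq_min_of_sub_eq_mul hpos hsub hf₁ hf₂)
end
end
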